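/- arXiv:2008.09754 — 5 statements merged into one kernel-verified Lean document; each statement's English description precedes it below -/
import Mathlib

section
/- Let G be a connected graph of size q with d pendant (degree-1) vertices, and let f : E(G) → {1,…,q} be a local antimagic labeling (a bijection such that adjacent vertices have distinct induced vertex sums). If the edge labeled q is not a pendant edge, then the number of distinct induced vertex labels c(f) is at least d+2. -/
open SimpleGraph

/-- The induced vertex sum of an edge labeling. -/
noncomputable def vertexSum {V : Type*} (G : SimpleGraph V) (f : Sym2 V → ℕ) (x : V) : ℕ :=
  ∑ᶠ y ∈ G.neighborSet x, f s(x, y)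

/-- `f` is a local antimagic labeling of `G`. -/
def IsLocalAntimagic {V : Type*} (G : SimpleGraph V) (f : Sym2 V → ℕ) : Prop :=
  Set.BijOn f G.edgeSet (Set.Icc 1 G.edgeSet.ncard) ∧
  ∀ ⦃x y : V⦄, G.Adj x y → vertexSum G f x ≠ vertexSum G f y

/-- The number of distinct induced vertex labels of `f`. -/
noncomputable def colorCount {V : Type*} (G : SimpleGraph V) (f : Sym2 V → ℕ) : ℕ :=
  (Set.range (vertexSum G f)).ncard

/-- The local antimagic chromatic number. -/
noncomputable def chiLA {V : Type*} (G : SimpleGraph V) : ℕ :=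
  sInf {n | ∃ f : Sym2 V → ℕ, IsLocalAntimagic G f ∧ colorCount G f = n}

/-- A pendant vertex: a vertex of degree 1. -/
def IsPendant {V : Type*} (G : SimpleGraph V) (x : V) : Prop :=
  (G.neighborSet x).ncard = 1

/-- A pendant edge: an edge incident to a pendant vertex. -/
def IsPendantEdge {V : Type*} (G : SimpleGraph V) (e : Sym2 V) : Prop :=
  e ∈ G.edgeSet ∧ ∃ x ∈ e, IsPendant G x

/-- The spider graph with `d` legs of lengths `y i`: the core is `none`, and leg `i`
consists of vertices `some ⟨i, j⟩` for `j : Fin (y i)`, forming a path from the core. -/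
def spider (d : ℕ) (y : Fin d → ℕ) : SimpleGraph (Option (Σ i : Fin d, Fin (y i))) :=
  SimpleGraph.fromRel (fun u v =>
    ∃ (i : Fin d) (j : Fin (y i)), (u = none ∧ v = some ⟨i, j⟩ ∧ (j : ℕ) = 0) ∨
      (∃ k : Fin (y i), u = some ⟨i, j⟩ ∧ v = some ⟨i, k⟩ ∧ (j : ℕ) + 1 = (k : ℕ)))


section Aux
open Set

variable {V : Type*} {G : SimpleGraph V} {f : Sym2 V → ℕ}

private lemma aux_nbr_finite (hE : G.edgeSet.Finite) (x : V) :
    (G.neighborSet x).Finite := by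
  apply Set.Finite.of_finite_image (f := fun y => s(x, y))
  · apply hE.subset
    rintro _ ⟨y, hy, rfl⟩
    exact hy
  · intro a _ b _ h
    exact Sym2.congr_right.1 h

private lemma aux_vsum_pendant {x a : V} (ha : G.neighborSet x = {a}) :
    vertexSum G f x = f s(x, a) := by
  rw [vertexSum, ha, finsum_mem_singleton]

private lemma aux_walk {x x' : V} (hx : G.neighborSet x = {x'})
    (hx' : G.neighborSet x' = {x}) {a u : V} (w : G.Walk a u)
    (ha : a = x ∨ a = x') : u = x ∨ u = x' := by
  induction w with
  | nil => exact ha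
  | @cons a b u h p ih =>
    apply ih
    rcases ha with rfl | rfl
    · have hb : b ∈ G.neighborSet a := h
      rw [hx] at hb
      exact Or.inr hb
    · have hb : b ∈ G.neighborSet a := h
      rw [hx'] at hb
      exact Or.inl hb

end Aux

theorem stmt0 {V : Type*} (G : SimpleGraph V) (hconn : G.Connected)
    (q d : ℕ) (hq : G.edgeSet.ncard = q)
    (hd : {x : V | IsPendant G x}.ncard = d)
    (f : Sym2 V → ℕ) (hf : IsLocalAntimagic G f)
    (e : Sym2 V) (he : e ∈ G.edgeSet) (hfe : f e = q)
    (hne : ¬ IsPendantEdge G e) :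
    d + 2 ≤ colorCount G f := by
  classical
  obtain ⟨hbij, hanti⟩ := hf
  rw [hq] at hbij
  have hq1 : 1 ≤ q := hfe ▸ (hbij.mapsTo he).1
  have hE : G.edgeSet.Finite := Set.finite_of_ncard_ne_zero (by omega)
  have hub : ∀ e' ∈ G.edgeSet, f e' ≤ q := fun e' h => (hbij.mapsTo h).2
  have hlb : ∀ e' ∈ G.edgeSet, 1 ≤ f e' := fun e' h => (hbij.mapsTo h).1
  obtain ⟨u, v, rfl⟩ : ∃ a b, e = s(a, b) :=
    Sym2.ind (f := fun z => ∃ a b, z = s(a, b)) (fun a b => ⟨a, b, rfl⟩) e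
  have huv : G.Adj u v := G.mem_edgeSet.1 he
  have hup : ¬ IsPendant G u := fun h => hne ⟨he, u, Sym2.mem_mk_left u v, h⟩
  have hvp : ¬ IsPendant G v := fun h => hne ⟨he, v, Sym2.mem_mk_right u v, h⟩
  -- non-pendant endpoints have large vertex sums
  have key : ∀ a b : V, G.Adj a b → ¬ IsPendant G a →
      f s(a, b) + 1 ≤ vertexSum G f a := by
    intro a b hab hpa
    have hfin := aux_nbr_finite hE a
    have hb : b ∈ hfin.toFinset := hfin.mem_toFinset.2 hab
    have hpos : 0 < (G.neighborSet a).ncard := (Set.ncard_pos hfin).2 ⟨b, hab⟩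
    have h2 : 1 < (G.neighborSet a).ncard := by
      rcases Nat.lt_or_ge 1 (G.neighborSet a).ncard with h | h
      · exact h
      · exact absurd (by omega : (G.neighborSet a).ncard = 1) hpa
    obtain ⟨c, hc, hcb⟩ : ∃ c ∈ G.neighborSet a, c ≠ b := by
      by_contra hcon
      push_neg at hcon
      have hsub : G.neighborSet a ⊆ {b} := fun z hz => hcon z hz
      have := Set.ncard_le_ncard hsub (Set.finite_singleton b)
      simp only [Set.ncard_singleton] at this
      omega
    have hcF : c ∈ hfin.toFinset := hfin.mem_toFinset.2 hc
    have hsum : vertexSum G f a = ∑ y ∈ hfin.toFinset, f s(a, y) :=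
      finsum_mem_eq_finite_toFinset_sum _ hfin
    have hsubF : ({b, c} : Finset V) ⊆ hfin.toFinset := by
      intro z hz
      rcases Finset.mem_insert.1 hz with rfl | hz
      · exact hb
      · rw [Finset.mem_singleton.1 hz]; exact hcF
    have hle : ∑ y ∈ ({b, c} : Finset V), f s(a, y) ≤ ∑ y ∈ hfin.toFinset, f s(a, y) :=
      Finset.sum_le_sum_of_subset hsubF
    rw [Finset.sum_pair (Ne.symm hcb)] at hle
    have hc1 : 1 ≤ f s(a, c) := hlb _ (G.mem_edgeSet.2 hc)
    rw [hsum]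
    omega
  have hu : q + 1 ≤ vertexSum G f u := by
    have := key u v huv hup
    rwa [hfe] at this
  have hv : q + 1 ≤ vertexSum G f v := by
    have := key v u huv.symm hvp
    rwa [Sym2.eq_swap, hfe] at this
  -- pendant vertices
  set P : Set V := {x : V | IsPendant G x} with hP
  have pend_edge : ∀ x ∈ P, ∃ a, G.neighborSet x = {a} := fun x hx => Set.ncard_eq_one.1 hx
  have hPsub : ∀ x ∈ P, vertexSum G f x ∈ Set.Icc 1 q := by
    intro x hx
    obtain ⟨a, ha⟩ := pend_edge x hx
    have hadj : G.Adj x a := by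
      rw [← SimpleGraph.mem_neighborSet, ha]; exact rfl
    rw [aux_vsum_pendant ha]
    exact hbij.mapsTo (G.mem_edgeSet.2 hadj)
  have hinj : Set.InjOn (vertexSum G f) P := by
    intro x hx x' hx' hvv
    by_contra hxx
    obtain ⟨a, ha⟩ := pend_edge x hx
    obtain ⟨a', ha'⟩ := pend_edge x' hx'
    have hadj : G.Adj x a := by
      rw [← SimpleGraph.mem_neighborSet, ha]; exact rfl
    have hadj' : G.Adj x' a' := by
      rw [← SimpleGraph.mem_neighborSet, ha']; exact rfl
    rw [aux_vsum_pendant ha, aux_vsum_pendant ha'] at hvv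
    have heq : s(x, a) = s(x', a') :=
      hbij.injOn (G.mem_edgeSet.2 hadj) (G.mem_edgeSet.2 hadj') hvv
    rw [Sym2.eq_iff] at heq
    rcases heq with ⟨h1, _⟩ | ⟨h1, h2⟩
    · exact hxx h1
    · subst h1
      subst h2
      obtain ⟨w⟩ := hconn.preconnected u x
      rcases aux_walk ha ha' w.reverse (Or.inl rfl) with rfl | rfl
      · exact hup hx
      · exact hup hx'
  have hPfin : P.Finite := by
    apply Set.Finite.of_finite_image (f := vertexSum G f) _ hinj
    apply (Set.finite_Icc 1 q).subset
    rintro _ ⟨x, hx, rfl⟩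
    exact hPsub x hx
  have himfin : (vertexSum G f '' P).Finite := hPfin.image _
  -- the range is finite
  have hrange : (Set.range (vertexSum G f)).Finite := by
    apply (Set.finite_Iic (q * q)).subset
    rintro _ ⟨x, rfl⟩
    simp only [Set.mem_Iic]
    have hfin := aux_nbr_finite hE x
    have hcard : hfin.toFinset.card = (G.neighborSet x).ncard :=
      (Set.ncard_eq_toFinset_card _ hfin).symm
    have hdle : (G.neighborSet x).ncard ≤ q := by
      rw [← hq]
      exact Set.ncard_le_ncard_of_injOn (fun y => s(x, y))
        (fun y hy => G.mem_edgeSet.2 hy) (fun a _ b _ h => Sym2.congr_right.1 h) hE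
    have hsum : vertexSum G f x = ∑ y ∈ hfin.toFinset, f s(x, y) :=
      finsum_mem_eq_finite_toFinset_sum _ hfin
    rw [hsum]
    calc ∑ y ∈ hfin.toFinset, f s(x, y) ≤ hfin.toFinset.card • q :=
          Finset.sum_le_card_nsmul _ _ _
            (fun y hy => hub _ (G.mem_edgeSet.2 (hfin.mem_toFinset.1 hy)))
      _ ≤ q * q := by
          rw [smul_eq_mul, hcard]
          exact Nat.mul_le_mul_right q hdle
  -- count
  have hvnot : vertexSum G f v ∉ vertexSum G f '' P := by
    rintro ⟨x, hx, hvx⟩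
    have := (hPsub x hx).2
    omega
  have hunot : vertexSum G f u ∉ insert (vertexSum G f v) (vertexSum G f '' P) := by
    intro h
    rcases h with h | ⟨x, hx, hux⟩
    · exact hanti huv h
    · have := (hPsub x hx).2
      omega
  have hT : insert (vertexSum G f u) (insert (vertexSum G f v) (vertexSum G f '' P)) ⊆
      Set.range (vertexSum G f) := by
    intro z hz
    rcases hz with rfl | hz
    · exact ⟨u, rfl⟩
    rcases hz with rfl | ⟨x, _, rfl⟩
    · exact ⟨v, rfl⟩
    · exact ⟨x, rfl⟩
  have hcount : (insert (vertexSum G f u) (insert (vertexSum G f v)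
      (vertexSum G f '' P))).ncard = d + 2 := by
    rw [Set.ncard_insert_of_notMem hunot (himfin.insert _),
      Set.ncard_insert_of_notMem hvnot himfin,
      Set.ncard_image_of_injOn hinj, hd]
  rw [colorCount, ← hcount]
  exact Set.ncard_le_ncard hT hrange
end

section
/- For every spider graph G with d ≥ 3 legs, d+1 ≤ χ_la(G) ≤ d+2. -/
open SimpleGraph

/-! Lower bound: the `d` leaves have as sums the labels of their pendant edges, which are distinct
and at most `m = |E|`, while the non-pendant end of the edge labelled `m` has a sum exceeding `m`.

Upper bound: number the edges `1, …, m` leg after leg, so that consecutive edges of a leg get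
consecutive numbers, and give the edge numbered `k` the `k`-th term of `m, 1, m - 1, 2, …`.
Labels with consecutive numbers add up to `m` or `m + 1`, so every inner vertex of a leg gets one
of these two sums and every leaf the label of its edge. Numbering leg `0` from its leaf and leg
`1` from the core makes the leaf edge of leg `0` labelled `m` and the core edges of legs `0`
and `1` consecutive; with the core edge of leg `2` (label at least `2`) the core sum is then at
least `m + 2`. So the sums are the `d` leaf labels, `m + 1` and the core sum. -/

section VertexSum

variable {V : Type*} {G : SimpleGraph V} {f : Sym2 V → ℕ}

lemma vertexSum_eq_of_neighborSet_eq_singleton {x u : V} (h : G.neighborSet x = {u}) :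
    vertexSum G f x = f s(x, u) := by
  rw [vertexSum, h, finsum_mem_singleton]

lemma vertexSum_eq_of_neighborSet_eq_pair {x u w : V} (h : G.neighborSet x = {u, w})
    (huw : u ≠ w) : vertexSum G f x = f s(x, u) + f s(x, w) := by
  rw [vertexSum, h, finsum_mem_pair huw]

lemma add_le_vertexSum [Finite V] {x u w : V} (hu : G.Adj x u) (hw : G.Adj x w) (huw : u ≠ w) :
    f s(x, u) + f s(x, w) ≤ vertexSum G f x := by
  classical
  rw [vertexSum, finsum_mem_eq_finite_toFinset_sum _ (Set.toFinite _),
    ← Finset.sum_pair (f := fun v => f s(x, v)) huw]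
  exact Finset.sum_le_sum_of_subset (by simp [Set.insert_subset_iff, hu, hw])

lemma exists_adj_vertexSum_eq_of_isPendant {x : V} (hx : IsPendant G x) :
    ∃ u, G.Adj x u ∧ vertexSum G f x = f s(x, u) := by
  obtain ⟨u, hu⟩ := Set.ncard_eq_one.1 hx
  exact ⟨u, by simp [← mem_neighborSet, hu], vertexSum_eq_of_neighborSet_eq_singleton hu⟩

lemma lt_vertexSum_of_not_isPendant [Finite V] (hf : ∀ e ∈ G.edgeSet, 0 < f e) {z w : V}
    (hzw : G.Adj z w) (hz : ¬ IsPendant G z) : f s(z, w) < vertexSum G f z := by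
  have hdeg : 1 < (G.neighborSet z).ncard := by
    have := (Set.ncard_pos (s := G.neighborSet z) (Set.toFinite _)).2 ⟨w, hzw⟩
    have : (G.neighborSet z).ncard ≠ 1 := hz
    omega
  obtain ⟨w', hw', hne⟩ := Set.exists_ne_of_one_lt_ncard hdeg w
  have := add_le_vertexSum (f := f) hzw hw' hne.symm
  have := hf _ ((mem_edgeSet G).2 hw')
  omega

lemma vertexSum_le_of_isPendant (hf : Set.MapsTo f G.edgeSet (Set.Icc 1 G.edgeSet.ncard))
    {x : V} (hx : IsPendant G x) : vertexSum G f x ≤ G.edgeSet.ncard := by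
  obtain ⟨u, hu, hxu⟩ := exists_adj_vertexSum_eq_of_isPendant (f := f) hx
  exact hxu ▸ (hf hu).2

lemma injOn_vertexSum_setOf_isPendant (hf : Set.InjOn f G.edgeSet)
    (hG : ∀ ⦃x z⦄, G.Adj x z → IsPendant G x → ¬ IsPendant G z) :
    Set.InjOn (vertexSum G f) {x | IsPendant G x} := by
  intro x hx x' hx' h
  obtain ⟨u, hu, hxu⟩ := exists_adj_vertexSum_eq_of_isPendant (f := f) hx
  obtain ⟨u', hu', hxu'⟩ := exists_adj_vertexSum_eq_of_isPendant (f := f) hx'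
  rw [hxu, hxu'] at h
  rcases Sym2.eq_iff.1 (hf hu hu' h) with ⟨rfl, -⟩ | ⟨rfl, rfl⟩
  · rfl
  · exact absurd hx' (hG hu hx)

lemma exists_ncard_edgeSet_lt_vertexSum [Finite V]
    (hf : Set.BijOn f G.edgeSet (Set.Icc 1 G.edgeSet.ncard))
    (hG : ∀ ⦃x z⦄, G.Adj x z → IsPendant G x → ¬ IsPendant G z)
    (hE : G.edgeSet.Nonempty) :
    ∃ z, G.edgeSet.ncard < vertexSum G f z := by
  obtain ⟨e, he, hfe⟩ := hf.surjOn ⟨(Set.ncard_pos (Set.toFinite _)).2 hE, le_rfl⟩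
  have hpos : ∀ e ∈ G.edgeSet, 0 < f e := fun e he => (hf.mapsTo he).1
  induction e using Sym2.ind with
  | _ a b =>
    by_cases ha : IsPendant G a
    · refine ⟨b, ?_⟩
      rw [← hfe, Sym2.eq_swap]
      exact lt_vertexSum_of_not_isPendant hpos (G.adj_symm he) (hG he ha)
    · refine ⟨a, ?_⟩
      rw [← hfe]
      exact lt_vertexSum_of_not_isPendant hpos he ha

theorem ncard_setOf_isPendant_add_one_le_colorCount [Finite V]
    (hf : Set.BijOn f G.edgeSet (Set.Icc 1 G.edgeSet.ncard))
    (hG : ∀ ⦃x z⦄, G.Adj x z → IsPendant G x → ¬ IsPendant G z)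
    (hE : G.edgeSet.Nonempty) :
    {x | IsPendant G x}.ncard + 1 ≤ colorCount G f := by
  obtain ⟨z, hz⟩ := exists_ncard_edgeSet_lt_vertexSum hf hG hE
  have hz' : vertexSum G f z ∉ vertexSum G f '' {x | IsPendant G x} := by
    rintro ⟨x, hx, hxz⟩
    have := vertexSum_le_of_isPendant hf.mapsTo hx
    omega
  calc {x | IsPendant G x}.ncard + 1
      = (insert (vertexSum G f z) (vertexSum G f '' {x | IsPendant G x})).ncard := by
        rw [Set.ncard_insert_of_notMem hz',
          (injOn_vertexSum_setOf_isPendant hf.injOn hG).ncard_image]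
    _ ≤ colorCount G f := by
        refine Set.ncard_le_ncard ?_ (Set.toFinite _)
        rintro _ (rfl | ⟨x, -, rfl⟩) <;> exact ⟨_, rfl⟩

end VertexSum

/-- The sequence `m, 1, m - 1, 2, m - 2, …` at positions `1, 2, 3, …`. -/
def zigzag (m k : ℕ) : ℕ := if k % 2 = 0 then k / 2 else m + 1 - (k + 1) / 2

lemma zigzag_bijOn (m : ℕ) : Set.BijOn (zigzag m) (Set.Icc 1 m) (Set.Icc 1 m) := by
  refine ⟨fun k hk => ?_, fun k hk k' hk' h => ?_, fun v hv => ?_⟩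
  · simp only [Set.mem_Icc, zigzag] at hk ⊢; split <;> omega
  · simp only [Set.mem_Icc, zigzag] at hk hk' h; split at h <;> split at h <;> omega
  · simp only [Set.mem_Icc] at hv
    by_cases h : 2 * v ≤ m
    · exact ⟨2 * v, by simp only [Set.mem_Icc]; omega, by simp [zigzag]⟩
    · refine ⟨2 * (m + 1 - v) - 1, by simp only [Set.mem_Icc]; omega, ?_⟩
      simp only [zigzag]; split <;> omega

lemma zigzag_add_zigzag_succ {m k : ℕ} (hk : k + 1 ≤ m) :
    m ≤ zigzag m k + zigzag m (k + 1) ∧ zigzag m k + zigzag m (k + 1) ≤ m + 1 := by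
  simp only [zigzag]; split <;> split <;> omega

lemma zigzag_one (m : ℕ) : zigzag m 1 = m := by simp [zigzag]

lemma two_le_zigzag {m k : ℕ} (h₁ : 3 ≤ k) (h₂ : k ≤ m) : 2 ≤ zigzag m k := by
  simp only [zigzag]; split <;> omega

namespace Spider

variable {d : ℕ} {y : Fin d → ℕ} {f : Sym2 (Option (Σ i : Fin d, Fin (y i))) → ℕ}

def parent (p : Σ i : Fin d, Fin (y i)) : Option (Σ i : Fin d, Fin (y i)) :=
  if h : (p.2 : ℕ) = 0 then none else some ⟨p.1, ⟨p.2 - 1, by omega⟩⟩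

/-- Edges are indexed by their endpoint farther from the core. -/
def edge (p : Σ i : Fin d, Fin (y i)) : Sym2 (Option (Σ i : Fin d, Fin (y i))) :=
  s(parent p, some p)

lemma sigma_mk_eq_iff {i i' : Fin d} {j : Fin (y i)} {k : Fin (y i')} :
    (⟨i, j⟩ : Σ i : Fin d, Fin (y i)) = ⟨i', k⟩ ↔ i = i' ∧ (j : ℕ) = k := by
  constructor
  · rintro ⟨⟩; exact ⟨rfl, rfl⟩
  · rintro ⟨rfl, h⟩; rw [Fin.ext h]

lemma injective_some_mk (g : ∀ i, Fin (y i)) :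
    Function.Injective fun i => (some ⟨i, g i⟩ : Option (Σ i : Fin d, Fin (y i))) :=
  fun _ _ h => (sigma_mk_eq_iff.1 (Option.some.inj h)).1

lemma parent_eq_none_iff {p : Σ i : Fin d, Fin (y i)} : parent p = none ↔ (p.2 : ℕ) = 0 := by
  unfold parent; split_ifs <;> simpa

lemma parent_eq_some_iff {p q : Σ i : Fin d, Fin (y i)} :
    parent p = some q ↔ p.1 = q.1 ∧ (p.2 : ℕ) = q.2 + 1 := by
  obtain ⟨i, j⟩ := p; obtain ⟨i', k⟩ := q
  unfold parent
  split_ifs with h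
  · simp only [false_iff, not_and] at h ⊢
    omega
  · simp only [Option.some.injEq, sigma_mk_eq_iff] at h ⊢
    exact and_congr_right fun _ => by omega

lemma parent_ne_some (p : Σ i : Fin d, Fin (y i)) : parent p ≠ some p := by
  rw [Ne, parent_eq_some_iff]; omega

lemma parent_ne_some_succ {i : Fin d} {j : Fin (y i)} (h : (j : ℕ) + 1 < y i) :
    parent ⟨i, j⟩ ≠ some ⟨i, ⟨j + 1, h⟩⟩ := by
  intro h'
  have := (parent_eq_some_iff.1 h').2
  dsimp only at this
  omega

lemma spiderRel_iff_exists_parent {u v : Option (Σ i : Fin d, Fin (y i))} :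
    (∃ (i : Fin d) (j : Fin (y i)), (u = none ∧ v = some ⟨i, j⟩ ∧ (j : ℕ) = 0) ∨
      (∃ k : Fin (y i), u = some ⟨i, j⟩ ∧ v = some ⟨i, k⟩ ∧
        (j : ℕ) + 1 = (k : ℕ))) ↔
    ∃ p, parent p = u ∧ some p = v := by
  constructor
  · rintro ⟨i, j, ⟨rfl, rfl, hj⟩ | ⟨k, rfl, rfl, hjk⟩⟩
    · exact ⟨⟨i, j⟩, parent_eq_none_iff.2 hj, rfl⟩
    · exact ⟨⟨i, k⟩, parent_eq_some_iff.2 ⟨rfl, hjk.symm⟩, rfl⟩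
  · rintro ⟨⟨i, k⟩, hu, rfl⟩
    cases u with
    | none => exact ⟨i, k, Or.inl ⟨rfl, rfl, parent_eq_none_iff.1 hu⟩⟩
    | some q =>
      obtain ⟨rfl, hk⟩ := parent_eq_some_iff.1 hu
      exact ⟨q.1, q.2, Or.inr ⟨k, rfl, rfl, hk.symm⟩⟩

lemma spider_adj_iff {u v : Option (Σ i : Fin d, Fin (y i))} :
    (spider d y).Adj u v ↔ ∃ p, edge p = s(u, v) := by
  simp only [spider, fromRel_adj, spiderRel_iff_exists_parent, edge, Sym2.eq_iff]
  constructor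
  · rintro ⟨-, ⟨p, h⟩ | ⟨p, h⟩⟩
    · exact ⟨p, Or.inl h⟩
    · exact ⟨p, Or.inr h⟩
  · rintro ⟨p, ⟨rfl, rfl⟩ | ⟨rfl, rfl⟩⟩
    · exact ⟨parent_ne_some p, Or.inl ⟨p, rfl, rfl⟩⟩
    · exact ⟨(parent_ne_some p).symm, Or.inr ⟨p, rfl, rfl⟩⟩

lemma edgeSet_spider : (spider d y).edgeSet = Set.range (edge (y := y)) := by
  ext e
  induction e using Sym2.ind with
  | _ u v => simp [spider_adj_iff]

lemma edge_mem_edgeSet (p : Σ i : Fin d, Fin (y i)) : edge p ∈ (spider d y).edgeSet :=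
  edgeSet_spider ▸ ⟨p, rfl⟩

lemma edge_injective : Function.Injective (edge (y := y)) := by
  intro p q h
  rcases Sym2.eq_iff.1 h with ⟨-, h⟩ | ⟨h₁, h₂⟩
  · exact Option.some.inj h
  · have := (parent_eq_some_iff.1 h₁).2
    have := (parent_eq_some_iff.1 h₂.symm).2
    omega

lemma ncard_edgeSet_spider : (spider d y).edgeSet.ncard = ∑ i, y i := by
  rw [edgeSet_spider, Set.ncard_range_of_injective edge_injective, Nat.card_eq_fintype_card,
    Fintype.card_sigma]
  simp

lemma edge_mk_succ {i : Fin d} {j : Fin (y i)} (h : (j : ℕ) + 1 < y i) :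
    edge ⟨i, ⟨j + 1, h⟩⟩ = s(some ⟨i, j⟩, some ⟨i, ⟨j + 1, h⟩⟩) := by
  rw [edge, (parent_eq_some_iff (p := ⟨i, ⟨j + 1, h⟩⟩) (q := ⟨i, j⟩)).2 ⟨rfl, rfl⟩]

lemma mem_neighborSet_some {i : Fin d} {j : Fin (y i)} {w : Option (Σ i : Fin d, Fin (y i))} :
    w ∈ (spider d y).neighborSet (some ⟨i, j⟩) ↔
      w = parent ⟨i, j⟩ ∨ ∃ h : (j : ℕ) + 1 < y i, w = some ⟨i, ⟨j + 1, h⟩⟩ := by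
  rw [mem_neighborSet, spider_adj_iff]
  constructor
  · rintro ⟨⟨i', k⟩, h⟩
    rcases Sym2.eq_iff.1 h with ⟨hp, rfl⟩ | ⟨rfl, hp⟩
    · obtain ⟨rfl, hk : (k : ℕ) = j + 1⟩ := parent_eq_some_iff.1 hp
      exact Or.inr ⟨hk ▸ k.2, congrArg some (sigma_mk_eq_iff.2 ⟨rfl, hk⟩)⟩
    · exact Or.inl (by rw [Option.some.inj hp])
  · rintro (rfl | ⟨h, rfl⟩)
    · exact ⟨_, Sym2.eq_swap⟩
    · exact ⟨_, edge_mk_succ h⟩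

lemma neighborSet_none (hy : ∀ i, 1 ≤ y i) :
    (spider d y).neighborSet none = Set.range fun i => some ⟨i, ⟨0, hy i⟩⟩ := by
  ext w
  rw [mem_neighborSet, spider_adj_iff]
  constructor
  · rintro ⟨⟨i, k⟩, h⟩
    rcases Sym2.eq_iff.1 h with ⟨hp, rfl⟩ | ⟨-, hp⟩
    · have hk : (k : ℕ) = 0 := parent_eq_none_iff.1 hp
      exact ⟨i, congrArg some (sigma_mk_eq_iff.2 ⟨rfl, hk.symm⟩)⟩
    · exact absurd hp (Option.some_ne_none _)
  · rintro ⟨i, rfl⟩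
    exact ⟨_, congrArg₂ _ (parent_eq_none_iff.2 rfl) rfl⟩

lemma neighborSet_some_of_lt {i : Fin d} {j : Fin (y i)} (h : (j : ℕ) + 1 < y i) :
    (spider d y).neighborSet (some ⟨i, j⟩) =
      {parent ⟨i, j⟩, some ⟨i, ⟨j + 1, h⟩⟩} := by
  ext w
  rw [mem_neighborSet_some]
  simp [h]

lemma neighborSet_some_of_eq {i : Fin d} {j : Fin (y i)} (h : (j : ℕ) + 1 = y i) :
    (spider d y).neighborSet (some ⟨i, j⟩) = {parent ⟨i, j⟩} := by
  ext w
  rw [mem_neighborSet_some]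
  simp [h]

lemma vertexSum_none (hy : ∀ i, 1 ≤ y i) :
    vertexSum (spider d y) f none = ∑ i, f (edge ⟨i, ⟨0, hy i⟩⟩) := by
  rw [vertexSum, neighborSet_none hy, finsum_mem_range (injective_some_mk _),
    finsum_eq_sum_of_fintype]
  refine Finset.sum_congr rfl fun i _ => ?_
  rw [edge, (parent_eq_none_iff (p := ⟨i, ⟨0, hy i⟩⟩)).2 rfl]

lemma vertexSum_some_of_lt {i : Fin d} {j : Fin (y i)} (h : (j : ℕ) + 1 < y i) :
    vertexSum (spider d y) f (some ⟨i, j⟩) =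
      f (edge ⟨i, j⟩) + f (edge ⟨i, ⟨j + 1, h⟩⟩) := by
  rw [vertexSum_eq_of_neighborSet_eq_pair (neighborSet_some_of_lt h) (parent_ne_some_succ h),
    edge, Sym2.eq_swap, edge_mk_succ]

lemma vertexSum_some_of_eq {i : Fin d} {j : Fin (y i)} (h : (j : ℕ) + 1 = y i) :
    vertexSum (spider d y) f (some ⟨i, j⟩) = f (edge ⟨i, j⟩) := by
  rw [vertexSum_eq_of_neighborSet_eq_singleton (neighborSet_some_of_eq h), edge, Sym2.eq_swap]

/-- The two sums share the label of the edge between the two vertices. -/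
lemma vertexSum_ne_of_succ {n : ℕ} (hf : Set.BijOn f (spider d y).edgeSet (Set.Icc 1 n))
    {i : Fin d} {j : Fin (y i)} (h : (j : ℕ) + 1 < y i) :
    vertexSum (spider d y) f (some ⟨i, j⟩) ≠
      vertexSum (spider d y) f (some ⟨i, ⟨j + 1, h⟩⟩) := by
  rw [vertexSum_some_of_lt h]
  by_cases h' : (j : ℕ) + 1 + 1 < y i
  · rw [vertexSum_some_of_lt h']
    intro heq
    have := edge_injective (hf.injOn (edge_mem_edgeSet _) (edge_mem_edgeSet _)
      (Nat.add_right_cancel (heq.trans (Nat.add_comm _ _))))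
    have := (sigma_mk_eq_iff.1 this).2
    dsimp only at this
    omega
  · rw [vertexSum_some_of_eq (show (j : ℕ) + 1 + 1 = y i by omega)]
    have := (hf.mapsTo (edge_mem_edgeSet ⟨i, j⟩)).1
    omega

def leafIndex (hy : ∀ i, 1 ≤ y i) (i : Fin d) : Fin (y i) :=
  ⟨y i - 1, by have := hy i; omega⟩

lemma isPendant_leaf (hy : ∀ i, 1 ≤ y i) (i : Fin d) :
    IsPendant (spider d y) (some ⟨i, leafIndex hy i⟩) := by
  have := hy i
  rw [IsPendant, neighborSet_some_of_eq (show y i - 1 + 1 = y i by omega), Set.ncard_singleton]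

lemma not_isPendant_parent (hd : 2 ≤ d) (hy : ∀ i, 1 ≤ y i) (p : Σ i : Fin d, Fin (y i)) :
    ¬ IsPendant (spider d y) (parent p) := by
  rw [IsPendant]
  cases hp : parent p with
  | none =>
    rw [neighborSet_none hy, Set.ncard_range_of_injective (injective_some_mk _),
      Nat.card_eq_fintype_card, Fintype.card_fin]
    omega
  | some q =>
    obtain ⟨i, k⟩ := q
    obtain ⟨rfl, hk⟩ := parent_eq_some_iff.1 hp
    have h : (k : ℕ) + 1 < y p.1 := hk ▸ p.2.2
    rw [neighborSet_some_of_lt h, Set.ncard_pair (parent_ne_some_succ h)]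
    omega

lemma le_ncard_setOf_isPendant (hy : ∀ i, 1 ≤ y i) :
    d ≤ {x | IsPendant (spider d y) x}.ncard := by
  have h := Set.ncard_range_of_injective (injective_some_mk (leafIndex hy))
  rw [Nat.card_eq_fintype_card, Fintype.card_fin] at h
  refine h.ge.trans (Set.ncard_le_ncard ?_ (Set.toFinite _))
  rintro _ ⟨i, rfl⟩
  exact isPendant_leaf hy i

theorem add_one_le_colorCount (hd : 2 ≤ d) (hy : ∀ i, 1 ≤ y i)
    (hf : Set.BijOn f (spider d y).edgeSet (Set.Icc 1 (spider d y).edgeSet.ncard)) :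
    d + 1 ≤ colorCount (spider d y) f := by
  have hE : (spider d y).edgeSet.Nonempty :=
    ⟨_, edge_mem_edgeSet ⟨⟨0, by omega⟩, ⟨0, hy _⟩⟩⟩
  have hG : ∀ ⦃x z⦄, (spider d y).Adj x z → IsPendant (spider d y) x →
      ¬ IsPendant (spider d y) z := by
    intro x z hxz hx hz
    obtain ⟨p, hp⟩ := spider_adj_iff.1 hxz
    rcases Sym2.eq_iff.1 hp with ⟨rfl, -⟩ | ⟨rfl, -⟩
    · exact not_isPendant_parent hd hy p hx
    · exact not_isPendant_parent hd hy p hz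
  have := le_ncard_setOf_isPendant hy
  have := ncard_setOf_isPendant_add_one_le_colorCount hf hG hE
  omega

/-- Leg `1` is traversed from the core outwards and every other leg from its leaf inwards, so
that the core edges of legs `0` and `1` receive consecutive numbers. -/
def orient : (Σ i : Fin d, Fin (y i)) ≃ (Σ i : Fin d, Fin (y i)) :=
  Equiv.sigmaCongrRight fun i => if (i : ℕ) = 1 then Equiv.refl _ else Fin.revPerm

def pos (p : Σ i : Fin d, Fin (y i)) : ℕ := finSigmaFinEquiv (orient p) + 1

def legStart (y : Fin d → ℕ) (i : Fin d) : ℕ := ∑ k : Fin i, y (Fin.castLE i.2.le k)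

lemma pos_mk (i : Fin d) (j : Fin (y i)) :
    pos ⟨i, j⟩ = legStart y i + (if (i : ℕ) = 1 then (j : ℕ) else y i - 1 - j) + 1 := by
  simp only [pos, orient, finSigmaFinEquiv_apply, Equiv.sigmaCongrRight_apply, legStart]
  split_ifs
  · rfl
  · simp only [Fin.revPerm_apply, Fin.val_rev]
    omega

lemma pos_bijOn : Set.BijOn (pos (y := y)) Set.univ (Set.Icc 1 (∑ i, y i)) := by
  refine ⟨fun p _ => ?_, fun p _ q _ h => ?_, fun v hv => ?_⟩
  · have := (finSigmaFinEquiv (orient p)).2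
    simp only [pos, Set.mem_Icc]; omega
  · exact orient.injective (finSigmaFinEquiv.injective (Fin.ext (by simpa [pos] using h)))
  · simp only [Set.mem_Icc] at hv
    refine ⟨orient.symm (finSigmaFinEquiv.symm ⟨v - 1, by omega⟩), trivial, ?_⟩
    simp only [pos, Equiv.apply_symm_apply]; omega

lemma pos_succ_or {i : Fin d} {j : Fin (y i)} (h : (j : ℕ) + 1 < y i) :
    pos ⟨i, ⟨j + 1, h⟩⟩ = pos ⟨i, j⟩ + 1 ∨
      pos ⟨i, j⟩ = pos ⟨i, ⟨j + 1, h⟩⟩ + 1 := by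
  simp only [pos_mk]; split_ifs <;> omega

lemma legStart_zero (hd : 0 < d) : legStart y ⟨0, hd⟩ = 0 := Fin.sum_univ_zero _

lemma legStart_one (hd : 1 < d) : legStart y ⟨1, hd⟩ = y ⟨0, by omega⟩ := Fin.sum_univ_one _

lemma pos_leaf_zero (hd : 0 < d) (hy : ∀ i, 1 ≤ y i) :
    pos ⟨⟨0, hd⟩, leafIndex hy _⟩ = 1 := by
  rw [pos_mk, legStart_zero, if_neg zero_ne_one]
  simp [leafIndex]

lemma pos_core_zero (hd : 0 < d) (hy : ∀ i, 1 ≤ y i) :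
    pos ⟨⟨0, hd⟩, ⟨0, hy _⟩⟩ = y ⟨0, hd⟩ := by
  rw [pos_mk, legStart_zero, if_neg zero_ne_one]
  have := hy ⟨0, hd⟩
  dsimp only
  omega

lemma pos_core_one (hd : 1 < d) (hy : ∀ i, 1 ≤ y i) :
    pos ⟨⟨1, hd⟩, ⟨0, hy _⟩⟩ = y ⟨0, by omega⟩ + 1 := by
  rw [pos_mk, legStart_one, if_pos rfl]
  rfl

lemma three_le_pos_core_two (hd : 2 < d) (hy : ∀ i, 1 ≤ y i) :
    3 ≤ pos ⟨⟨2, hd⟩, ⟨0, hy _⟩⟩ := by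
  simp only [pos_mk, legStart, Fin.sum_univ_two]
  have := hy (Fin.castLE hd.le 0)
  have := hy (Fin.castLE hd.le 1)
  omega

noncomputable def labeling (d : ℕ) (y : Fin d → ℕ) :
    Sym2 (Option (Σ i : Fin d, Fin (y i))) → ℕ :=
  Function.extend edge (fun p => zigzag (∑ i, y i) (pos p)) 0

lemma labeling_edge (p : Σ i : Fin d, Fin (y i)) :
    labeling d y (edge p) = zigzag (∑ i, y i) (pos p) :=
  edge_injective.extend_apply _ _ _

lemma labeling_bijOn :
    Set.BijOn (labeling d y) (spider d y).edgeSet (Set.Icc 1 (∑ i, y i)) := by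
  rw [edgeSet_spider, ← Set.image_univ, ← Set.bijOn_comp_iff edge_injective.injOn, labeling,
    Function.extend_comp edge_injective]
  exact (zigzag_bijOn _).comp pos_bijOn

lemma labeling_leaf_zero (hd : 0 < d) (hy : ∀ i, 1 ≤ y i) :
    labeling d y (edge ⟨⟨0, hd⟩, leafIndex hy _⟩) = ∑ i, y i := by
  rw [labeling_edge, pos_leaf_zero, zigzag_one]

lemma vertexSum_labeling_some_of_lt {i : Fin d} {j : Fin (y i)} (h : (j : ℕ) + 1 < y i) :
    ∑ i, y i ≤ vertexSum (spider d y) (labeling d y) (some ⟨i, j⟩) ∧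
      vertexSum (spider d y) (labeling d y) (some ⟨i, j⟩) ≤ ∑ i, y i + 1 := by
  rw [vertexSum_some_of_lt h, labeling_edge, labeling_edge]
  have h₁ := pos_bijOn.mapsTo (Set.mem_univ ⟨i, j⟩)
  have h₂ := pos_bijOn.mapsTo (Set.mem_univ ⟨i, ⟨j + 1, h⟩⟩)
  simp only [Set.mem_Icc] at h₁ h₂
  rcases pos_succ_or h with e | e
  · rw [e]
    exact zigzag_add_zigzag_succ (by omega)
  · rw [e, add_comm]
    exact zigzag_add_zigzag_succ (by omega)

lemma vertexSum_labeling_some_le (i : Fin d) (j : Fin (y i)) :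
    vertexSum (spider d y) (labeling d y) (some ⟨i, j⟩) ≤ ∑ i, y i + 1 := by
  by_cases h : (j : ℕ) + 1 < y i
  · exact (vertexSum_labeling_some_of_lt h).2
  · rw [vertexSum_some_of_eq (by omega), labeling_edge]
    have := (zigzag_bijOn _).mapsTo (pos_bijOn.mapsTo (Set.mem_univ ⟨i, j⟩))
    simp only [Set.mem_Icc] at this
    omega

lemma add_two_le_vertexSum_labeling_none (hd : 3 ≤ d) (hy : ∀ i, 1 ≤ y i) :
    ∑ i, y i + 2 ≤ vertexSum (spider d y) (labeling d y) none := by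
  have hsub := Finset.sum_le_sum_of_subset
    (f := fun i => labeling d y (edge ⟨i, ⟨0, hy i⟩⟩))
    (Finset.subset_univ {⟨0, by omega⟩, ⟨1, by omega⟩, ⟨2, by omega⟩})
  rw [Finset.sum_insert (by simp), Finset.sum_pair (by simp)] at hsub
  simp only [labeling_edge, pos_core_zero, pos_core_one] at hsub
  rw [vertexSum_none hy]
  simp only [labeling_edge]
  have h₁ := (pos_bijOn.mapsTo (Set.mem_univ ⟨⟨1, by omega⟩, ⟨0, hy _⟩⟩)).2
  rw [pos_core_one] at h₁
  have h₂ := three_le_pos_core_two (by omega) hy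
  have hM := (pos_bijOn.mapsTo (Set.mem_univ ⟨⟨2, by omega⟩, ⟨0, hy _⟩⟩)).2
  have := zigzag_add_zigzag_succ (m := ∑ i, y i) (k := y ⟨0, by omega⟩) (by omega)
  have := two_le_zigzag h₂ hM
  omega

lemma isLocalAntimagic_labeling (hd : 3 ≤ d) (hy : ∀ i, 1 ≤ y i) :
    IsLocalAntimagic (spider d y) (labeling d y) := by
  refine ⟨ncard_edgeSet_spider ▸ labeling_bijOn, ?_⟩
  suffices h : ∀ p, vertexSum (spider d y) (labeling d y) (parent p) ≠
      vertexSum (spider d y) (labeling d y) (some p) by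
    intro u v huv
    obtain ⟨p, hp⟩ := spider_adj_iff.1 huv
    rcases Sym2.eq_iff.1 hp with ⟨rfl, rfl⟩ | ⟨rfl, rfl⟩
    exacts [h p, (h p).symm]
  rintro ⟨i, j⟩
  cases hp : parent ⟨i, j⟩ with
  | none =>
    have := add_two_le_vertexSum_labeling_none hd hy
    have := vertexSum_labeling_some_le i j
    omega
  | some q =>
    obtain ⟨i', k⟩ := q
    obtain ⟨hi : i = i', hk : (j : ℕ) = k + 1⟩ := parent_eq_some_iff.1 hp
    subst hi
    have hk' : (k : ℕ) + 1 < y i := hk ▸ j.2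
    obtain rfl : j = ⟨k + 1, hk'⟩ := Fin.ext hk
    exact vertexSum_ne_of_succ labeling_bijOn _

lemma vertexSum_labeling_mem (hd : 3 ≤ d) (hy : ∀ i, 1 ≤ y i)
    (x : Option (Σ i : Fin d, Fin (y i))) :
    vertexSum (spider d y) (labeling d y) x ∈
      insert (vertexSum (spider d y) (labeling d y) none) (insert (∑ i, y i + 1)
        (Set.range fun i => labeling d y (edge ⟨i, leafIndex hy i⟩))) := by
  rcases x with _ | ⟨i, j⟩
  · exact Or.inl rfl
  by_cases h : (j : ℕ) + 1 < y i
  · obtain ⟨h₁, h₂⟩ := vertexSum_labeling_some_of_lt h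
    rcases (by omega : vertexSum (spider d y) (labeling d y) (some ⟨i, j⟩) = ∑ i, y i ∨
      vertexSum (spider d y) (labeling d y) (some ⟨i, j⟩) = ∑ i, y i + 1) with e | e
    · exact Or.inr (Or.inr ⟨⟨0, by omega⟩, e ▸ labeling_leaf_zero _ hy⟩)
    · exact Or.inr (Or.inl e)
  · obtain rfl : j = leafIndex hy i := Fin.ext (show (j : ℕ) = y i - 1 by omega)
    exact Or.inr (Or.inr ⟨i, (vertexSum_some_of_eq (by omega)).symm⟩)

lemma colorCount_labeling_le (hd : 3 ≤ d) (hy : ∀ i, 1 ≤ y i) :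
    colorCount (spider d y) (labeling d y) ≤ d + 2 := by
  have hleaves : (Set.range fun i => labeling d y (edge ⟨i, leafIndex hy i⟩)).ncard ≤ d := by
    rw [← Set.image_univ]
    exact (Set.ncard_image_le (Set.toFinite _)).trans (by simp [Set.ncard_univ])
  calc colorCount (spider d y) (labeling d y)
      ≤ _ := Set.ncard_le_ncard (Set.range_subset_iff.2 (vertexSum_labeling_mem hd hy))
        (Set.toFinite _)
    _ ≤ (Set.range fun i => labeling d y (edge ⟨i, leafIndex hy i⟩)).ncard + 1 + 1 :=
        (Set.ncard_insert_le _ _).trans (Nat.add_le_add_right (Set.ncard_insert_le _ _) 1)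
    _ ≤ d + 2 := by omega

end Spider

theorem stmt4 (d : ℕ) (hd : 3 ≤ d) (y : Fin d → ℕ) (hy : ∀ i, 1 ≤ y i) :
    d + 1 ≤ chiLA (spider d y) ∧ chiLA (spider d y) ≤ d + 2 := by
  have hmem : colorCount (spider d y) (Spider.labeling d y) ∈
      {n | ∃ f, IsLocalAntimagic (spider d y) f ∧ colorCount (spider d y) f = n} :=
    ⟨_, Spider.isLocalAntimagic_labeling hd hy, rfl⟩
  obtain ⟨f, hf, hc⟩ := Nat.sInf_mem ⟨_, hmem⟩
  rw [chiLA, ← hc]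
  exact ⟨Spider.add_one_le_colorCount (by omega) hy hf.1,
    hc ▸ (Nat.sInf_le hmem).trans (Spider.colorCount_labeling_le hd hy)⟩
end

section
/- If a, b ≥ 2 are even integers, then the 3-leg spiders Sp(a,b,a), Sp(a,b,2a), Sp(a,b,2a+b), Sp(a,b,a+1), Sp(a,b,2a+1), and Sp(a,b,2a+b+1) all have local antimagic chromatic number 4. -/
open SimpleGraph

namespace SpiderAux

variable {y : Fin 3 → ℕ}

lemma adj_none_some {i : Fin 3} {j : Fin (y i)} :
    (spider 3 y).Adj none (some ⟨i, j⟩) ↔ (j : ℕ) = 0 := by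
  rw [spider, fromRel_adj]
  constructor
  · rintro ⟨-, h | h⟩
    · obtain ⟨i', j', h | ⟨k, h, -⟩⟩ := h
      · obtain ⟨-, h2, h3⟩ := h
        obtain ⟨rfl, h⟩ := Sigma.mk.inj_iff.mp (Option.some_injective _ h2).symm
        rw [heq_eq_eq] at h; subst h; exact h3
      · exact absurd h (by simp)
    · obtain ⟨i', j', h | ⟨k, h, h2, -⟩⟩ := h
      · exact absurd h.1 (by simp)
      · exact absurd h2 (by simp)
  · intro hj
    exact ⟨by simp, Or.inl ⟨i, j, Or.inl ⟨rfl, rfl, hj⟩⟩⟩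

lemma adj_some_some {i i' : Fin 3} {j : Fin (y i)} {j' : Fin (y i')} :
    (spider 3 y).Adj (some ⟨i, j⟩) (some ⟨i', j'⟩) ↔
      i = i' ∧ ((j : ℕ) + 1 = (j' : ℕ) ∨ (j' : ℕ) + 1 = (j : ℕ)) := by
  rw [spider, fromRel_adj]
  constructor
  · rintro ⟨hne, h | h⟩
    · obtain ⟨a, b, ⟨h, -⟩ | ⟨k, h1, h2, h3⟩⟩ := h
      · exact absurd h (by simp)
      · obtain ⟨rfl, hb⟩ := Sigma.mk.inj_iff.mp (Option.some_injective _ h1).symm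
        rw [heq_eq_eq] at hb; subst hb
        obtain ⟨rfl, hk⟩ := Sigma.mk.inj_iff.mp (Option.some_injective _ h2).symm
        rw [heq_eq_eq] at hk; subst hk
        exact ⟨rfl, Or.inl h3⟩
    · obtain ⟨a, b, ⟨h, -⟩ | ⟨k, h1, h2, h3⟩⟩ := h
      · exact absurd h (by simp)
      · obtain ⟨rfl, hb⟩ := Sigma.mk.inj_iff.mp (Option.some_injective _ h1).symm
        rw [heq_eq_eq] at hb; subst hb
        obtain ⟨rfl, hk⟩ := Sigma.mk.inj_iff.mp (Option.some_injective _ h2).symm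
        rw [heq_eq_eq] at hk; subst hk
        exact ⟨rfl, Or.inr h3⟩
  · rintro ⟨rfl, h | h⟩
    · refine ⟨by simp [Fin.val_eq_val] at *; omega, Or.inl ⟨i, j, Or.inr ⟨j', rfl, rfl, h⟩⟩⟩
    · refine ⟨by simp [Fin.val_eq_val] at *; omega, Or.inr ⟨i, j', Or.inr ⟨j, rfl, rfl, h⟩⟩⟩

end SpiderAux

namespace SpiderAux

variable (y : Fin 3 → ℕ)

/-- The vertex preceding `⟨i,j⟩` (towards the core). -/
def pv (i : Fin 3) (j : Fin (y i)) : Option (Σ i : Fin 3, Fin (y i)) :=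
  if (j : ℕ) = 0 then none else
    some ⟨i, ⟨(j : ℕ) - 1, Nat.lt_of_le_of_lt (Nat.sub_le _ _) j.isLt⟩⟩

/-- The edge with deeper endpoint `⟨i,j⟩`. -/
def eV (i : Fin 3) (j : Fin (y i)) : Sym2 (Option (Σ i : Fin 3, Fin (y i))) :=
  s(pv y i j, some ⟨i, j⟩)

variable {y}

lemma adj_pv {i : Fin 3} {j : Fin (y i)} : (spider 3 y).Adj (pv y i j) (some ⟨i, j⟩) := by
  by_cases h : (j : ℕ) = 0
  · rw [pv, if_pos h]; exact adj_none_some.mpr h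
  · rw [pv, if_neg h]; exact adj_some_some.mpr ⟨rfl, Or.inl (by simp; omega)⟩

lemma eV_mem {i : Fin 3} {j : Fin (y i)} : eV y i j ∈ (spider 3 y).edgeSet := adj_pv

lemma mem_neighborSet_some {i : Fin 3} {j : Fin (y i)} {v : Option (Σ i : Fin 3, Fin (y i))} :
    v ∈ (spider 3 y).neighborSet (some ⟨i, j⟩) ↔
      v = pv y i j ∨ ∃ h : (j : ℕ) + 1 < y i, v = some ⟨i, ⟨(j : ℕ) + 1, h⟩⟩ := by
  constructor
  · intro hv
    match v with
    | none =>
      have h0 := adj_none_some.mp ((spider 3 y).adj_symm hv)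
      left; rw [pv, if_pos h0]
    | some ⟨i', j'⟩ =>
      obtain ⟨rfl, h | h⟩ := adj_some_some.mp hv
      · right
        refine ⟨h ▸ j'.isLt, ?_⟩
        simp only [Option.some.injEq, Sigma.mk.inj_iff, heq_eq_eq, true_and]
        ext; simp; omega
      · left; rw [pv, if_neg (by omega)]
        simp only [Option.some.injEq, Sigma.mk.inj_iff, heq_eq_eq, true_and]
        ext; simp; omega
  · rintro (rfl | ⟨h, rfl⟩)
    · exact adj_pv.symm
    · exact adj_some_some.mpr ⟨rfl, Or.inl rfl⟩

lemma pv_ne_next {i : Fin 3} {j : Fin (y i)} (h : (j : ℕ) + 1 < y i) :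
    pv y i j ≠ some ⟨i, ⟨(j : ℕ) + 1, h⟩⟩ := by
  by_cases h0 : (j : ℕ) = 0
  · rw [pv, if_pos h0]; simp
  · rw [pv, if_neg h0]
    simp only [Option.some.injEq, Sigma.mk.inj_iff, heq_eq_eq, true_and, ne_eq]
    intro hh
    have := congrArg Fin.val hh
    simp at this

lemma ns_mid {i : Fin 3} {j : Fin (y i)} (h : (j : ℕ) + 1 < y i) :
    (spider 3 y).neighborSet (some ⟨i, j⟩) = {pv y i j, some ⟨i, ⟨(j : ℕ) + 1, h⟩⟩} := by
  ext v
  rw [mem_neighborSet_some]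
  constructor
  · rintro (rfl | ⟨h', rfl⟩)
    · exact Or.inl rfl
    · exact Or.inr rfl
  · rintro (rfl | rfl)
    · exact Or.inl rfl
    · exact Or.inr ⟨h, rfl⟩

lemma ns_leaf {i : Fin 3} {j : Fin (y i)} (h : (j : ℕ) + 1 = y i) :
    (spider 3 y).neighborSet (some ⟨i, j⟩) = {pv y i j} := by
  ext v
  rw [mem_neighborSet_some]
  constructor
  · rintro (rfl | ⟨h', rfl⟩)
    · rfl
    · omega
  · rintro rfl; exact Or.inl rfl

lemma ns_none (h : ∀ i, 0 < y i) :
    (spider 3 y).neighborSet none =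
      {some ⟨0, ⟨0, h 0⟩⟩, some ⟨1, ⟨0, h 1⟩⟩, some ⟨2, ⟨0, h 2⟩⟩} := by
  ext v
  constructor
  · intro hv
    match v with
    | none => exact absurd hv (spider 3 y).irrefl
    | some ⟨i, j⟩ =>
      have h0 := adj_none_some.mp hv
      have hj : j = ⟨0, h i⟩ := by ext; exact h0
      subst hj
      fin_cases i
      · exact Or.inl rfl
      · exact Or.inr (Or.inl rfl)
      · exact Or.inr (Or.inr rfl)
  · rintro (rfl | rfl | rfl) <;> exact adj_none_some.mpr rfl

variable (y)

lemma vs_leaf (f : Sym2 (Option (Σ i : Fin 3, Fin (y i))) → ℕ) {i : Fin 3} {j : Fin (y i)}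
    (h : (j : ℕ) + 1 = y i) :
    vertexSum (spider 3 y) f (some ⟨i, j⟩) = f (eV y i j) := by
  rw [vertexSum, ns_leaf h, finsum_mem_singleton, eV, Sym2.eq_swap]

lemma vs_mid (f : Sym2 (Option (Σ i : Fin 3, Fin (y i))) → ℕ) {i : Fin 3} {j : Fin (y i)}
    (h : (j : ℕ) + 1 < y i) :
    vertexSum (spider 3 y) f (some ⟨i, j⟩) = f (eV y i j) + f (eV y i ⟨(j : ℕ) + 1, h⟩) := by
  rw [vertexSum, ns_mid h]
  rw [show ({pv y i j, some ⟨i, ⟨(j : ℕ) + 1, h⟩⟩} :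
      Set (Option (Σ i : Fin 3, Fin (y i)))) =
      ↑({pv y i j, some ⟨i, ⟨(j : ℕ) + 1, h⟩⟩} : Finset (Option (Σ i : Fin 3, Fin (y i)))) by simp]
  rw [finsum_mem_coe_finset, Finset.sum_insert (by simpa using pv_ne_next h),
    Finset.sum_singleton]
  congr 1
  rw [eV, Sym2.eq_swap]

lemma vs_core (f : Sym2 (Option (Σ i : Fin 3, Fin (y i))) → ℕ) (h : ∀ i, 0 < y i) :
    vertexSum (spider 3 y) f none =
      f (eV y 0 ⟨0, h 0⟩) + f (eV y 1 ⟨0, h 1⟩) + f (eV y 2 ⟨0, h 2⟩) := by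
  rw [vertexSum, ns_none h]
  rw [show ({some ⟨0, ⟨0, h 0⟩⟩, some ⟨1, ⟨0, h 1⟩⟩, some ⟨2, ⟨0, h 2⟩⟩} :
      Set (Option (Σ i : Fin 3, Fin (y i)))) =
      ↑({some ⟨0, ⟨0, h 0⟩⟩, some ⟨1, ⟨0, h 1⟩⟩, some ⟨2, ⟨0, h 2⟩⟩} :
        Finset (Option (Σ i : Fin 3, Fin (y i)))) by simp]
  rw [finsum_mem_coe_finset, Finset.sum_insert (by simp), Finset.sum_insert (by simp),
    Finset.sum_singleton]
  have he : ∀ (i : Fin 3) (hh : 0 < y i), eV y i ⟨0, hh⟩ = s(none, some ⟨i, ⟨0, hh⟩⟩) := by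
    intro i hh; rw [eV, pv, if_pos rfl]
  rw [he 0, he 1, he 2]
  try ring

end SpiderAux

namespace SpiderAux

variable (y : Fin 3 → ℕ)

def eSig : (Σ i : Fin 3, Fin (y i)) → Sym2 (Option (Σ i : Fin 3, Fin (y i))) :=
  fun p => eV y p.1 p.2

variable {y}

lemma pv_succ {i : Fin 3} {j j' : Fin (y i)} (h : (j : ℕ) + 1 = (j' : ℕ)) :
    pv y i j' = some ⟨i, j⟩ := by
  rw [pv, if_neg (by omega)]
  simp only [Option.some.injEq, Sigma.mk.inj_iff, heq_eq_eq, true_and]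
  ext; simp; omega

lemma edgeSet_eq : (spider 3 y).edgeSet = Set.range (eSig y) := by
  ext e
  induction e with
  | _ u v =>
    constructor
    · intro huv
      rw [mem_edgeSet] at huv
      match u, v with
      | none, none => exact absurd huv (spider 3 y).irrefl
      | none, some ⟨i, j⟩ =>
        have h0 := adj_none_some.mp huv
        exact ⟨⟨i, j⟩, by rw [eSig, eV, pv, if_pos h0]⟩
      | some ⟨i, j⟩, none =>
        have h0 := adj_none_some.mp huv.symm
        exact ⟨⟨i, j⟩, by rw [eSig, eV, pv, if_pos h0, Sym2.eq_swap]⟩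
      | some ⟨i, j⟩, some ⟨i', j'⟩ =>
        obtain ⟨rfl, h | h⟩ := adj_some_some.mp huv
        · exact ⟨⟨i, j'⟩, by rw [eSig, eV, pv_succ h]⟩
        · exact ⟨⟨i, j⟩, by rw [eSig, eV, pv_succ h, Sym2.eq_swap]⟩
    · rintro ⟨p, hp⟩
      exact hp ▸ eV_mem

lemma eSig_injective : Function.Injective (eSig y) := by
  rintro ⟨i, j⟩ ⟨i', j'⟩ h
  rw [eSig, eSig, eV, eV, Sym2.eq_iff] at h
  obtain ⟨h1, h2⟩ | ⟨h1, h2⟩ := h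
  · obtain ⟨rfl, hj⟩ := Sigma.mk.inj_iff.mp (Option.some_injective _ h2)
    rw [heq_eq_eq] at hj; subst hj; rfl
  · exfalso
    by_cases e1 : (j' : ℕ) = 0
    · rw [pv, if_pos e1] at h2; simp at h2
    · rw [pv, if_neg e1] at h2
      obtain ⟨rfl, hj⟩ := Sigma.mk.inj_iff.mp (Option.some_injective _ h2)
      rw [heq_eq_eq] at hj
      by_cases e2 : (j : ℕ) = 0
      · rw [pv, if_pos e2] at h1; simp at h1
      · rw [pv, if_neg e2] at h1
        obtain ⟨-, hj'⟩ := Sigma.mk.inj_iff.mp (Option.some_injective _ h1)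
        rw [heq_eq_eq] at hj'
        have a1 := congrArg Fin.val hj
        have a2 := congrArg Fin.val hj'
        simp at a1 a2
        omega

lemma ncard_edgeSet : (spider 3 y).edgeSet.ncard = y 0 + y 1 + y 2 := by
  rw [edgeSet_eq]
  rw [show Set.range (eSig y) = ↑(Finset.univ.image (eSig y)) by simp]
  rw [Set.ncard_coe_finset, Finset.card_image_of_injective _ eSig_injective,
    Finset.card_univ, Fintype.card_sigma]
  simp [Fin.sum_univ_three]

end SpiderAux

namespace SpiderAux

variable (y : Fin 3 → ℕ)

def F0 (L : Fin 3 → ℕ → ℕ) :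
    Option (Σ i : Fin 3, Fin (y i)) → Option (Σ i : Fin 3, Fin (y i)) → ℕ
  | none, some ⟨i, j⟩ => if (j : ℕ) = 0 then L i 0 else 0
  | some ⟨i, j⟩, some ⟨i', j'⟩ => if i = i' ∧ (j : ℕ) + 1 = (j' : ℕ) then L i' (j' : ℕ) else 0
  | _, _ => 0

def mkF (L : Fin 3 → ℕ → ℕ) : Sym2 (Option (Σ i : Fin 3, Fin (y i))) → ℕ :=
  Sym2.lift ⟨fun u v => F0 y L u v + F0 y L v u, fun _ _ => add_comm _ _⟩

variable {y}

lemma mkF_eV (L : Fin 3 → ℕ → ℕ) {i : Fin 3} {j : Fin (y i)} :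
    mkF y L (eV y i j) = L i (j : ℕ) := by
  by_cases h0 : (j : ℕ) = 0
  · rw [eV, pv, if_pos h0, mkF, Sym2.lift_mk]
    show (if (j : ℕ) = 0 then L i 0 else 0) + 0 = L i (j : ℕ)
    rw [if_pos h0, h0, add_zero]
  · rw [eV, pv, if_neg h0, mkF, Sym2.lift_mk]
    show (if i = i ∧ (j : ℕ) - 1 + 1 = (j : ℕ) then L i (j : ℕ) else 0) +
      (if i = i ∧ (j : ℕ) + 1 = (j : ℕ) - 1 then L i ((j : ℕ) - 1) else 0) = L i (j : ℕ)
    rw [if_pos ⟨rfl, by omega⟩, if_neg (by omega), add_zero]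

lemma bijOn_mkF (L : Fin 3 → ℕ → ℕ)
    (hmem : ∀ (i : Fin 3) (j : ℕ), j < y i → L i j ∈ Set.Icc 1 (y 0 + y 1 + y 2))
    (hinj : ∀ (i i' : Fin 3) (j j' : ℕ), j < y i → j' < y i' →
      L i j = L i' j' → i = i' ∧ j = j') :
    Set.BijOn (mkF y L) (spider 3 y).edgeSet
      (Set.Icc 1 (spider 3 y).edgeSet.ncard) := by
  have hginj : Function.Injective (fun p : Σ i : Fin 3, Fin (y i) => L p.1 (p.2 : ℕ)) := by
    rintro ⟨i, j⟩ ⟨i', j'⟩ h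
    obtain ⟨rfl, hj⟩ := hinj i i' j j' j.isLt j'.isLt h
    simp only [Sigma.mk.inj_iff, heq_eq_eq, true_and]
    exact Fin.ext hj
  have himg : Finset.univ.image (fun p : Σ i : Fin 3, Fin (y i) => L p.1 (p.2 : ℕ)) =
      Finset.Icc 1 (y 0 + y 1 + y 2) := by
    apply Finset.eq_of_subset_of_card_le
    · intro m hm
      simp only [Finset.mem_image, Finset.mem_univ, true_and] at hm
      obtain ⟨p, rfl⟩ := hm
      have := hmem p.1 p.2 p.2.isLt
      simpa [Finset.mem_Icc] using this
    · rw [Finset.card_image_of_injective _ hginj, Finset.card_univ, Fintype.card_sigma,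
        Nat.card_Icc]
      simp [Fin.sum_univ_three]
  rw [ncard_edgeSet, edgeSet_eq]
  refine ⟨?_, ?_, ?_⟩
  · rintro e ⟨p, rfl⟩
    rw [show eSig y p = eV y p.1 p.2 from rfl, mkF_eV]
    exact hmem p.1 p.2 p.2.isLt
  · rintro e ⟨p, rfl⟩ e' ⟨p', rfl⟩ h
    rw [show eSig y p = eV y p.1 p.2 from rfl, show eSig y p' = eV y p'.1 p'.2 from rfl,
      mkF_eV, mkF_eV] at h
    exact congrArg _ (hginj h)
  · intro m hm
    have : m ∈ Finset.Icc 1 (y 0 + y 1 + y 2) := by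
      rw [Finset.mem_Icc]; exact ⟨hm.1, hm.2⟩
    rw [← himg, Finset.mem_image] at this
    obtain ⟨p, -, hp⟩ := this
    exact ⟨eSig y p, ⟨p, rfl⟩, by rw [show eSig y p = eV y p.1 p.2 from rfl, mkF_eV]; exact hp⟩

end SpiderAux

namespace SpiderAux

theorem master (y : Fin 3 → ℕ) (hy : ∀ i, 2 ≤ y i) (L : Fin 3 → ℕ → ℕ)
    (w1 w2 w3 w4 : ℕ)
    (hmem : ∀ (i : Fin 3) (j : ℕ), j < y i → L i j ∈ Set.Icc 1 (y 0 + y 1 + y 2))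
    (hinj : ∀ (i i' : Fin 3) (j j' : ℕ), j < y i → j' < y i' →
      L i j = L i' j' → i = i' ∧ j = j')
    (hne12 : w1 ≠ w2) (hne13 : w1 ≠ w3) (hne14 : w1 ≠ w4)
    (hne23 : w2 ≠ w3) (hne24 : w2 ≠ w4) (hne34 : w3 ≠ w4)
    (hleaf0 : L 0 (y 0 - 1) = w1) (hleaf1 : L 1 (y 1 - 1) = w2) (hleaf2 : L 2 (y 2 - 1) = w3)
    (hfourth : ∃ i : Fin 3, L i 0 + L i 1 = w4)
    (hcore : L 0 0 + L 1 0 + L 2 0 ∈ ({w1, w2, w3, w4} : Set ℕ))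
    (hmid : ∀ (i : Fin 3) (j : ℕ), j + 1 < y i → L i j + L i (j + 1) ∈ ({w1, w2, w3, w4} : Set ℕ))
    (hadj1 : ∀ i : Fin 3, L 0 0 + L 1 0 + L 2 0 ≠ L i 0 + L i 1)
    (hadj2 : ∀ (i : Fin 3) (j : ℕ), j + 2 < y i → L i j + L i (j + 1) ≠ L i (j + 1) + L i (j + 2))
    (hadj3 : ∀ i : Fin 3, L i (y i - 2) + L i (y i - 1) ≠ L i (y i - 1)) :
    IsLocalAntimagic (spider 3 y) (mkF y L) ∧ colorCount (spider 3 y) (mkF y L) = 4 := by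
  have h0 : ∀ i, 0 < y i := fun i => lt_of_lt_of_le (by norm_num) (hy i)
  have vsc : vertexSum (spider 3 y) (mkF y L) none = L 0 0 + L 1 0 + L 2 0 := by
    rw [vs_core y (mkF y L) h0, mkF_eV, mkF_eV, mkF_eV]
  have vsm : ∀ (i : Fin 3) (j : Fin (y i)) (_ : (j : ℕ) + 1 < y i),
      vertexSum (spider 3 y) (mkF y L) (some ⟨i, j⟩) = L i (j : ℕ) + L i ((j : ℕ) + 1) := by
    intro i j h
    rw [vs_mid y (mkF y L) h, mkF_eV, mkF_eV]
  have vsl : ∀ (i : Fin 3) (j : Fin (y i)) (_ : (j : ℕ) + 1 = y i),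
      vertexSum (spider 3 y) (mkF y L) (some ⟨i, j⟩) = L i (j : ℕ) := by
    intro i j h
    rw [vs_leaf y (mkF y L) h, mkF_eV]
  have hns : ∀ (i : Fin 3) (j : Fin (y i)), (j : ℕ) = 0 →
      vertexSum (spider 3 y) (mkF y L) none ≠
        vertexSum (spider 3 y) (mkF y L) (some ⟨i, j⟩) := by
    intro i j hj0
    have hlt : (j : ℕ) + 1 < y i := by have := hy i; omega
    rw [vsc, vsm i j hlt, hj0]
    exact hadj1 i
  have hss : ∀ (i : Fin 3) (j j' : Fin (y i)), (j : ℕ) + 1 = (j' : ℕ) →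
      vertexSum (spider 3 y) (mkF y L) (some ⟨i, j⟩) ≠
        vertexSum (spider 3 y) (mkF y L) (some ⟨i, j'⟩) := by
    intro i j j' hj
    have hj1 : (j : ℕ) + 1 < y i := hj ▸ j'.isLt
    rw [vsm i j hj1]
    by_cases h2 : (j' : ℕ) + 1 < y i
    · rw [vsm i j' h2, ← hj]
      exact hadj2 i j (by omega)
    · have hl : (j' : ℕ) + 1 = y i := by have := j'.isLt; omega
      rw [vsl i j' hl]
      have e1 : (j : ℕ) = y i - 2 := by omega
      have e2 : (j' : ℕ) = y i - 1 := by omega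
      have e3 : y i - 2 + 1 = y i - 1 := by omega
      rw [e1, e2, e3]
      exact hadj3 i
  constructor
  · constructor
    · exact bijOn_mkF L hmem hinj
    · intro x x' hadj
      match x, x' with
      | none, none => exact absurd hadj (spider 3 y).irrefl
      | none, some ⟨i, j⟩ => exact hns i j (adj_none_some.mp hadj)
      | some ⟨i, j⟩, none => exact (hns i j (adj_none_some.mp hadj.symm)).symm
      | some ⟨i, j⟩, some ⟨i', j'⟩ =>
        obtain ⟨rfl, h | h⟩ := adj_some_some.mp hadj
        · exact hss i j j' h
        · exact (hss i j' j h).symm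
  · have hrange : Set.range (vertexSum (spider 3 y) (mkF y L)) = {w1, w2, w3, w4} := by
      ext m
      constructor
      · rintro ⟨v, rfl⟩
        match v with
        | none => rw [vsc]; exact hcore
        | some ⟨i, j⟩ =>
          by_cases h2 : (j : ℕ) + 1 < y i
          · rw [vsm i j h2]; exact hmid i j h2
          · have hl : (j : ℕ) + 1 = y i := by have := j.isLt; omega
            rw [vsl i j hl]
            have e2 : (j : ℕ) = y i - 1 := by omega
            rw [e2]
            match i with
            | 0 => rw [hleaf0]; exact Or.inl rfl
            | 1 => rw [hleaf1]; exact Or.inr (Or.inl rfl)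
            | 2 => rw [hleaf2]; exact Or.inr (Or.inr (Or.inl rfl))
      · intro hm
        rcases hm with rfl | rfl | rfl | rfl
        · refine ⟨some ⟨0, ⟨y 0 - 1, by have := hy 0; omega⟩⟩, ?_⟩
          rw [vsl 0 ⟨y 0 - 1, by have := hy 0; omega⟩ (by have := hy 0; simp; omega)]
          exact hleaf0
        · refine ⟨some ⟨1, ⟨y 1 - 1, by have := hy 1; omega⟩⟩, ?_⟩
          rw [vsl 1 ⟨y 1 - 1, by have := hy 1; omega⟩ (by have := hy 1; simp; omega)]
          exact hleaf1
        · refine ⟨some ⟨2, ⟨y 2 - 1, by have := hy 2; omega⟩⟩, ?_⟩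
          rw [vsl 2 ⟨y 2 - 1, by have := hy 2; omega⟩ (by have := hy 2; simp; omega)]
          exact hleaf2
        · obtain ⟨i0, hi0⟩ := hfourth
          refine ⟨some ⟨i0, ⟨0, h0 i0⟩⟩, ?_⟩
          rw [vsm i0 ⟨0, h0 i0⟩ (by have := hy i0; simp; omega)]
          exact hi0
    rw [colorCount, hrange]
    rw [show ({w1, w2, w3, w4} : Set ℕ) = ↑({w1, w2, w3, w4} : Finset ℕ) by simp]
    rw [Set.ncard_coe_finset]
    rw [Finset.card_insert_of_notMem (by simp [hne12, hne13, hne14]),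
      Finset.card_insert_of_notMem (by simp [hne23, hne24]),
      Finset.card_insert_of_notMem (by simp [hne34]), Finset.card_singleton]


theorem lower (y : Fin 3 → ℕ) (hy : ∀ i, 2 ≤ y i)
    (f : Sym2 (Option (Σ i : Fin 3, Fin (y i))) → ℕ)
    (hf : IsLocalAntimagic (spider 3 y) f) : 4 ≤ colorCount (spider 3 y) f := by
  obtain ⟨hbij, -⟩ := hf
  have hq : (spider 3 y).edgeSet.ncard = y 0 + y 1 + y 2 := ncard_edgeSet
  set q := y 0 + y 1 + y 2 with hqdef
  rw [hq] at hbij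
  have hq6 : 6 ≤ q := by have := hy 0; have := hy 1; have := hy 2; omega
  -- leaf labels
  have hleafIdx : ∀ i : Fin 3, y i - 1 < y i := fun i => by have := hy i; omega
  set ℓ : Fin 3 → ℕ := fun i => f (eV y i ⟨y i - 1, hleafIdx i⟩) with hℓ
  have hℓmem : ∀ i, ℓ i ∈ Set.Icc 1 q := fun i => hbij.mapsTo eV_mem
  have hℓvs : ∀ i : Fin 3, vertexSum (spider 3 y) f (some ⟨i, ⟨y i - 1, hleafIdx i⟩⟩) = ℓ i :=
    fun i => vs_leaf y f (by simp; have := hy i; omega)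
  have hℓinj : ∀ i i' : Fin 3, ℓ i = ℓ i' → i = i' := by
    intro i i' h
    have := hbij.injOn eV_mem eV_mem h
    have h2 := eSig_injective (show eSig y ⟨i, ⟨y i - 1, hleafIdx i⟩⟩ =
      eSig y ⟨i', ⟨y i' - 1, hleafIdx i'⟩⟩ from this)
    exact congrArg Sigma.fst h2
  -- a vertex with big sum
  have hbig : ∃ x, q + 1 ≤ vertexSum (spider 3 y) f x := by
    have hqicc : q ∈ Set.Icc 1 q := ⟨by omega, le_refl _⟩
    obtain ⟨e, he, hfe⟩ := hbij.surjOn hqicc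
    rw [edgeSet_eq] at he
    obtain ⟨⟨i, j⟩, rfl⟩ := he
    by_cases h2 : (j : ℕ) + 1 < y i
    · refine ⟨some ⟨i, j⟩, ?_⟩
      rw [vs_mid y f h2]
      have h3 := hbij.mapsTo (eV_mem (i := i) (j := ⟨(j : ℕ) + 1, h2⟩))
      have h4 : f (eSig y ⟨i, j⟩) = q := hfe
      rw [show eSig y ⟨i, j⟩ = eV y i j from rfl] at h4
      rw [h4]
      have := h3.1
      omega
    · have hj1 : 1 ≤ (j : ℕ) := by have := hy i; have := j.isLt; omega
      have hjm : (j : ℕ) - 1 + 1 < y i := by have := j.isLt; omega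
      refine ⟨some ⟨i, ⟨(j : ℕ) - 1, by omega⟩⟩, ?_⟩
      rw [vs_mid y f hjm]
      have hEq : (⟨(j : ℕ) - 1 + 1, hjm⟩ : Fin (y i)) = j := by ext; simp; omega
      rw [hEq]
      have h3 := hbij.mapsTo (eV_mem (i := i) (j := ⟨(j : ℕ) - 1, by omega⟩))
      have h4 : f (eSig y ⟨i, j⟩) = q := hfe
      rw [show eSig y ⟨i, j⟩ = eV y i j from rfl] at h4
      rw [h4]
      have := h3.1
      omega
  obtain ⟨x, hx⟩ := hbig
  have hsub : ({ℓ 0, ℓ 1, ℓ 2, vertexSum (spider 3 y) f x} : Set ℕ) ⊆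
      Set.range (vertexSum (spider 3 y) f) := by
    rintro m (rfl | rfl | rfl | rfl)
    · exact ⟨_, hℓvs 0⟩
    · exact ⟨_, hℓvs 1⟩
    · exact ⟨_, hℓvs 2⟩
    · exact ⟨x, rfl⟩
  have hcard : ({ℓ 0, ℓ 1, ℓ 2, vertexSum (spider 3 y) f x} : Set ℕ).ncard = 4 := by
    have d01 : ℓ 0 ≠ ℓ 1 := fun h => by simpa using hℓinj 0 1 h
    have d02 : ℓ 0 ≠ ℓ 2 := fun h => by simpa using hℓinj 0 2 h
    have d12 : ℓ 1 ≠ ℓ 2 := fun h => by simpa using hℓinj 1 2 h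
    have dx : ∀ i, ℓ i ≠ vertexSum (spider 3 y) f x := by
      intro i h
      have := (hℓmem i).2
      omega
    rw [show ({ℓ 0, ℓ 1, ℓ 2, vertexSum (spider 3 y) f x} : Set ℕ) =
      ↑({ℓ 0, ℓ 1, ℓ 2, vertexSum (spider 3 y) f x} : Finset ℕ) by simp]
    rw [Set.ncard_coe_finset]
    rw [Finset.card_insert_of_notMem (by simp [d01, d02, dx 0]),
      Finset.card_insert_of_notMem (by simp [d12, dx 1]),
      Finset.card_insert_of_notMem (by simp [dx 2]), Finset.card_singleton]
  calc 4 = ({ℓ 0, ℓ 1, ℓ 2, vertexSum (spider 3 y) f x} : Set ℕ).ncard := hcard.symm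
    _ ≤ (Set.range (vertexSum (spider 3 y) f)).ncard :=
        Set.ncard_le_ncard hsub (Set.finite_range _)


theorem chiLA_eq_four {y : Fin 3 → ℕ} (hy : ∀ i, 2 ≤ y i)
    (hex : ∃ f, IsLocalAntimagic (spider 3 y) f ∧ colorCount (spider 3 y) f = 4) :
    chiLA (spider 3 y) = 4 := by
  apply le_antisymm
  · exact Nat.sInf_le hex
  · refine le_csInf ⟨4, hex⟩ ?_
    rintro n ⟨f, hf, rfl⟩
    exact lower y hy f hf

/-- Labeling scheme for the cases `c ∈ {a, 2a, 2a+b}` with `a, b, c` even. -/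
def Le (a b c : ℕ) (i j : ℕ) : ℕ :=
  if j % 2 = 0 then
    (if i = 0 then a / 2 else if i = 1 then a / 2 + b / 2 else a / 2 + b / 2 + c / 2) - j / 2
  else
    a + b + c -
      (if i = 0 then a / 2 else if i = 1 then a / 2 + b / 2 else a / 2 + b / 2 + c / 2) +
      (j + 1) / 2

set_option maxHeartbeats 2000000 in
theorem case_even (a b c : ℕ) (ha2 : 2 ≤ a) (hb2 : 2 ≤ b) (hc2 : 2 ≤ c)
    (hae : a % 2 = 0) (hbe : b % 2 = 0) (hce : c % 2 = 0)
    (hcase : c = a ∨ c = 2 * a ∨ c = 2 * a + b) :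
    chiLA (spider 3 ![a, b, c]) = 4 := by
  have yval : ∀ i : Fin 3, (![a, b, c] : Fin 3 → ℕ) i =
      (if (i : ℕ) = 0 then a else if (i : ℕ) = 1 then b else c) := by
    intro i
    match i with
    | 0 => rfl
    | 1 => rfl
    | 2 => rfl
  have fv2 : ((2 : Fin 3) : ℕ) = 2 := rfl
  have hy : ∀ i : Fin 3, 2 ≤ (![a, b, c] : Fin 3 → ℕ) i := by
    intro i; rw [yval]; split_ifs <;> first | omega | exact (‹False›).elim
  refine chiLA_eq_four hy ?_
  have H := master ![a, b, c] hy (fun i j => Le a b c (i : ℕ) j)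
    (a + b + c) (a + b + c - a / 2) (a + b + c - a / 2 - b / 2) (a + b + c + 1)
    ?hmem ?hinj (by omega) (by omega) (by omega) (by omega) (by omega) (by omega)
    ?hl0 ?hl1 ?hl2 ?h4 ?hc ?hm ?ha1 ?ha2 ?ha3
  · exact ⟨_, H.1, H.2⟩
  case hmem =>
    intro i j hj
    rw [yval] at hj
    show Le a b c (i : ℕ) j ∈ Set.Icc 1 (a + b + c)
    rw [Set.mem_Icc]
    have h3 := i.isLt
    simp only [Le]
    split_ifs at hj ⊢ <;> first | omega | exact (‹False›).elim
  case hinj =>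
    intro i i' j j' hj hj' h
    rw [yval] at hj hj'
    have h3 := i.isLt
    have h3' := i'.isLt
    have key : (i : ℕ) = (i' : ℕ) ∧ j = j' := by
      simp only [Le] at h
      split_ifs at hj hj' h <;> first | omega | exact (‹False›).elim
    exact ⟨Fin.ext key.1, key.2⟩
  case hl0 =>
    show Le a b c 0 (a - 1) = a + b + c
    simp only [Le]; split_ifs <;> first | omega | exact (‹False›).elim
  case hl1 =>
    show Le a b c 1 (b - 1) = a + b + c - a / 2
    simp only [Le]; split_ifs <;> first | omega | exact (‹False›).elim
  case hl2 =>
    show Le a b c 2 (c - 1) = a + b + c - a / 2 - b / 2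
    simp only [Le]; split_ifs <;> first | omega | exact (‹False›).elim
  case h4 =>
    refine ⟨0, ?_⟩
    show Le a b c 0 0 + Le a b c 0 1 = a + b + c + 1
    simp only [Le]; split_ifs <;> first | omega | exact (‹False›).elim
  case hc =>
    show Le a b c 0 0 + Le a b c 1 0 + Le a b c 2 0 ∈ _
    simp only [Set.mem_insert_iff, Set.mem_singleton_iff, Le]
    norm_num
    first
    | omega
    | (split_ifs <;> omega)
  case hm =>
    intro i j hj
    rw [yval] at hj
    have h3 := i.isLt
    simp only [Set.mem_insert_iff, Set.mem_singleton_iff, Le]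
    split_ifs at hj ⊢ <;> first | omega | exact (‹False›).elim
  case ha1 =>
    intro i
    have h3 := i.isLt
    show Le a b c 0 0 + Le a b c 1 0 + Le a b c 2 0 ≠ Le a b c (i : ℕ) 0 + Le a b c (i : ℕ) 1
    simp only [Le]
    norm_num
    first
    | omega
    | (split_ifs <;> omega)
  case ha2 =>
    intro i j hj
    rw [yval] at hj
    have h3 := i.isLt
    simp only [Le]
    split_ifs at hj ⊢ <;> first | omega | exact (‹False›).elim
  case ha3 =>
    intro i
    rw [yval]
    have h3 := i.isLt
    simp only [Le]
    norm_num
    first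
    | omega
    | (split_ifs <;> omega)

/-- Labeling scheme for the cases `c ∈ {2a+1, 2a+b+1}` with `a, b` even. -/
def La (a b c : ℕ) (i j : ℕ) : ℕ :=
  if i = 2 then
    (if j % 2 = 0 then a / 2 + b / 2 + c / 2 + 1 + j / 2
     else a + b + c - (a / 2 + b / 2 + c / 2 + 1) - (j - 1) / 2)
  else Le a b c i j

set_option maxHeartbeats 2000000 in
theorem case_oddA (a b c : ℕ) (ha2 : 2 ≤ a) (hb2 : 2 ≤ b) (hc2 : 2 ≤ c)
    (hae : a % 2 = 0) (hbe : b % 2 = 0) (hco : c % 2 = 1)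
    (hcase : c = 2 * a + 1 ∨ c = 2 * a + b + 1) :
    chiLA (spider 3 ![a, b, c]) = 4 := by
  have yval : ∀ i : Fin 3, (![a, b, c] : Fin 3 → ℕ) i =
      (if (i : ℕ) = 0 then a else if (i : ℕ) = 1 then b else c) := by
    intro i
    match i with
    | 0 => rfl
    | 1 => rfl
    | 2 => rfl
  have hy : ∀ i : Fin 3, 2 ≤ (![a, b, c] : Fin 3 → ℕ) i := by
    intro i; rw [yval]; split_ifs <;> omega
  refine chiLA_eq_four hy ?_
  have H := master ![a, b, c] hy (fun i j => La a b c (i : ℕ) j)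
    (a + b + c) (a + b + c - a / 2) (a + b + c - a / 2 - b / 2) (a + b + c + 1)
    ?hmem ?hinj (by omega) (by omega) (by omega) (by omega) (by omega) (by omega)
    ?hl0 ?hl1 ?hl2 ?h4 ?hc ?hm ?ha1 ?ha2 ?ha3
  · exact ⟨_, H.1, H.2⟩
  case hmem =>
    intro i j hj
    rw [yval] at hj
    show La a b c (i : ℕ) j ∈ Set.Icc 1 (a + b + c)
    rw [Set.mem_Icc]
    have h3 := i.isLt
    simp only [La, Le]
    split_ifs at hj ⊢ <;> omega
  case hinj =>
    intro i i' j j' hj hj' h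
    rw [yval] at hj hj'
    have h3 := i.isLt
    have h3' := i'.isLt
    have key : (i : ℕ) = (i' : ℕ) ∧ j = j' := by
      simp only [La, Le] at h
      split_ifs at hj hj' h <;> omega
    exact ⟨Fin.ext key.1, key.2⟩
  case hl0 =>
    show La a b c 0 (a - 1) = a + b + c
    simp only [La, Le]
    norm_num
    first
    | omega
    | (split_ifs <;> omega)
  case hl1 =>
    show La a b c 1 (b - 1) = a + b + c - a / 2
    simp only [La, Le]
    norm_num
    first
    | omega
    | (split_ifs <;> omega)
  case hl2 =>
    show La a b c 2 (c - 1) = a + b + c - a / 2 - b / 2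
    simp only [La, Le]
    norm_num
    first
    | omega
    | (split_ifs <;> omega)
  case h4 =>
    refine ⟨0, ?_⟩
    show La a b c 0 0 + La a b c 0 1 = a + b + c + 1
    simp only [La, Le]
    norm_num
    first
    | omega
    | (split_ifs <;> omega)
  case hc =>
    show La a b c 0 0 + La a b c 1 0 + La a b c 2 0 ∈ _
    simp only [Set.mem_insert_iff, Set.mem_singleton_iff, La, Le]
    norm_num
    first
    | omega
    | (split_ifs <;> omega)
  case hm =>
    intro i j hj
    rw [yval] at hj
    have h3 := i.isLt
    simp only [Set.mem_insert_iff, Set.mem_singleton_iff, La, Le]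
    split_ifs at hj ⊢ <;> first | omega | exact (‹False›).elim
  case ha1 =>
    intro i
    have h3 := i.isLt
    show La a b c 0 0 + La a b c 1 0 + La a b c 2 0 ≠ La a b c (i : ℕ) 0 + La a b c (i : ℕ) 1
    simp only [La, Le]
    norm_num
    first
    | omega
    | (split_ifs <;> omega)
  case ha2 =>
    intro i j hj
    rw [yval] at hj
    have h3 := i.isLt
    simp only [La, Le]
    split_ifs at hj ⊢ <;> first | omega | exact (‹False›).elim
  case ha3 =>
    intro i
    rw [yval]
    have h3 := i.isLt
    simp only [La, Le]
    norm_num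
    first
    | omega
    | (split_ifs <;> omega)

/-- Labeling scheme for the case `c = a+1` with `a, b` even. -/
def Lb (a b c : ℕ) (i j : ℕ) : ℕ :=
  if i = 0 then (if j % 2 = 0 then 1 + j else a + b + c - j)
  else if i = 1 then (if j % 2 = 0 then b - j else a + b + c + j + 1 - b)
  else (if j % 2 = 0 then a + 1 + j else a + b + c - a - j)

set_option maxHeartbeats 2000000 in
theorem case_oddB (a b c : ℕ) (ha2 : 2 ≤ a) (hb2 : 2 ≤ b) (hc2 : 2 ≤ c)
    (hae : a % 2 = 0) (hbe : b % 2 = 0) (hcase : c = a + 1) :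
    chiLA (spider 3 ![a, b, c]) = 4 := by
  have yval : ∀ i : Fin 3, (![a, b, c] : Fin 3 → ℕ) i =
      (if (i : ℕ) = 0 then a else if (i : ℕ) = 1 then b else c) := by
    intro i
    match i with
    | 0 => rfl
    | 1 => rfl
    | 2 => rfl
  have hy : ∀ i : Fin 3, 2 ≤ (![a, b, c] : Fin 3 → ℕ) i := by
    intro i; rw [yval]; split_ifs <;> omega
  refine chiLA_eq_four hy ?_
  have H := master ![a, b, c] hy (fun i j => Lb a b c (i : ℕ) j)
    (a + b + 2) (a + b + c) (2 * a + 1) (a + b + c + 2)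
    ?hmem ?hinj (by omega) (by omega) (by omega) (by omega) (by omega) (by omega)
    ?hl0 ?hl1 ?hl2 ?h4 ?hc ?hm ?ha1 ?ha2 ?ha3
  · exact ⟨_, H.1, H.2⟩
  case hmem =>
    intro i j hj
    rw [yval] at hj
    show Lb a b c (i : ℕ) j ∈ Set.Icc 1 (a + b + c)
    rw [Set.mem_Icc]
    have h3 := i.isLt
    simp only [Lb]
    split_ifs at hj ⊢ <;> omega
  case hinj =>
    intro i i' j j' hj hj' h
    rw [yval] at hj hj'
    have h3 := i.isLt
    have h3' := i'.isLt
    have key : (i : ℕ) = (i' : ℕ) ∧ j = j' := by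
      simp only [Lb] at h
      split_ifs at hj hj' h <;> omega
    exact ⟨Fin.ext key.1, key.2⟩
  case hl0 =>
    show Lb a b c 0 (a - 1) = a + b + 2
    simp only [Lb]
    norm_num
    first
    | omega
    | (split_ifs <;> omega)
  case hl1 =>
    show Lb a b c 1 (b - 1) = a + b + c
    simp only [Lb]
    norm_num
    first
    | omega
    | (split_ifs <;> omega)
  case hl2 =>
    show Lb a b c 2 (c - 1) = 2 * a + 1
    simp only [Lb]
    norm_num
    first
    | omega
    | (split_ifs <;> omega)
  case h4 =>
    refine ⟨1, ?_⟩
    show Lb a b c 1 0 + Lb a b c 1 1 = a + b + c + 2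
    simp only [Lb]
    norm_num
    first
    | omega
    | (split_ifs <;> omega)
  case hc =>
    show Lb a b c 0 0 + Lb a b c 1 0 + Lb a b c 2 0 ∈ _
    simp only [Set.mem_insert_iff, Set.mem_singleton_iff, Lb]
    norm_num
    first
    | omega
    | (split_ifs <;> omega)
  case hm =>
    intro i j hj
    rw [yval] at hj
    have h3 := i.isLt
    simp only [Set.mem_insert_iff, Set.mem_singleton_iff, Lb]
    split_ifs at hj ⊢ <;> first | omega | exact (‹False›).elim
  case ha1 =>
    intro i
    have h3 := i.isLt
    show Lb a b c 0 0 + Lb a b c 1 0 + Lb a b c 2 0 ≠ Lb a b c (i : ℕ) 0 + Lb a b c (i : ℕ) 1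
    simp only [Lb]
    norm_num
    first
    | omega
    | (split_ifs <;> omega)
  case ha2 =>
    intro i j hj
    rw [yval] at hj
    have h3 := i.isLt
    simp only [Lb]
    split_ifs at hj ⊢ <;> first | omega | exact (‹False›).elim
  case ha3 =>
    intro i
    rw [yval]
    have h3 := i.isLt
    simp only [Lb]
    norm_num
    first
    | omega
    | (split_ifs <;> omega)

end SpiderAux


theorem stmt10 (a b : ℕ) (ha : 2 ≤ a) (hb : 2 ≤ b) (hea : Even a) (heb : Even b) :
    chiLA (spider 3 ![a, b, a]) = 4 ∧
    chiLA (spider 3 ![a, b, 2 * a]) = 4 ∧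
    chiLA (spider 3 ![a, b, 2 * a + b]) = 4 ∧
    chiLA (spider 3 ![a, b, a + 1]) = 4 ∧
    chiLA (spider 3 ![a, b, 2 * a + 1]) = 4 ∧
    chiLA (spider 3 ![a, b, 2 * a + b + 1]) = 4 := by
  have hae : a % 2 = 0 := Nat.even_iff.mp hea
  have hbe : b % 2 = 0 := Nat.even_iff.mp heb
  refine ⟨?_, ?_, ?_, ?_, ?_, ?_⟩
  · exact SpiderAux.case_even a b a ha hb ha hae hbe hae (Or.inl rfl)
  · exact SpiderAux.case_even a b (2 * a) ha hb (by omega) hae hbe (by omega)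
      (Or.inr (Or.inl rfl))
  · exact SpiderAux.case_even a b (2 * a + b) ha hb (by omega) hae hbe (by omega)
      (Or.inr (Or.inr rfl))
  · exact SpiderAux.case_oddB a b (a + 1) ha hb (by omega) hae hbe rfl
  · exact SpiderAux.case_oddA a b (2 * a + 1) ha hb (by omega) hae hbe (by omega) (Or.inl rfl)
  · exact SpiderAux.case_oddA a b (2 * a + b + 1) ha hb (by omega) hae hbe (by omega)
      (Or.inr rfl)
end

section
/- Let N ≥ 2 and let r satisfy: r = 1 if N = 2; r ∈ {2j : 1 ≤ j ≤ N/2 − 1} ∪ {1, N−1} if N ≥ 4 is even; r ∈ {2j−1 : 1 ≤ j ≤ (N−1)/2} ∪ {N−1} if N is odd. Then there exists a circular permutation (a₁,…,a_N) of {1,…,N} such that every sum of two (cyclically) consecutive terms a_i + a_{i+1} lies in {N, N+1, N+2}, and |a_N − a₁| = r. -/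
open SimpleGraph

/-- The zigzag Hamiltonian cycle of the graph on `{1, …, N}` where vertices are adjacent
iff their sum is in `{N, N+1, N+2}`. -/
def zz (N i : ℕ) : ℕ :=
  if i = 0 then 1
  else if (N % 2 = 1 ∧ i % 2 = 0) ∨
      (N % 2 = 0 ∧ ((i % 2 = 0 ∧ i ≤ N / 2) ∨ (i % 2 = 1 ∧ N / 2 < i))) then i
  else N + 1 - i

lemma zz_bijOn (N : ℕ) (hN : 2 ≤ N) :
    Set.BijOn (zz N) (Set.Ico 0 N) (Set.Icc 1 N) := by
  refine ⟨?_, ?_, ?_⟩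
  · intro i hi
    simp only [Set.mem_Ico] at hi
    simp only [Set.mem_Icc, zz]
    split_ifs <;> omega
  · intro i hi j hj h
    simp only [Set.mem_Ico] at hi hj
    simp only [zz] at h
    split_ifs at h <;> omega
  · intro y hy
    simp only [Set.mem_Icc] at hy
    by_cases h1 : y = 1
    · exact ⟨0, by simp [Set.mem_Ico]; omega, by simp [zz, h1]⟩
    by_cases hc : (N % 2 = 1 ∧ y % 2 = 0) ∨
        (N % 2 = 0 ∧ ((y % 2 = 0 ∧ y ≤ N / 2) ∨ (y % 2 = 1 ∧ N / 2 < y)))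
    · refine ⟨y, by simp [Set.mem_Ico]; omega, ?_⟩
      simp only [zz]
      split_ifs <;> omega
    · refine ⟨N + 1 - y, by simp [Set.mem_Ico]; omega, ?_⟩
      simp only [zz]
      split_ifs <;> omega

lemma zz_sum (N s : ℕ) (hN : 2 ≤ N) (hs : s < N) :
    zz N s + zz N ((s + 1) % N) = N ∨ zz N s + zz N ((s + 1) % N) = N + 1 ∨
      zz N s + zz N ((s + 1) % N) = N + 2 := by
  rcases eq_or_lt_of_le (Nat.succ_le_of_lt hs) with h | h
  · rw [show s + 1 = N from h, Nat.mod_self]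
    simp only [zz]
    split_ifs <;> first | exact ‹False›.elim | omega
  · rw [Nat.mod_eq_of_lt h]
    simp only [zz]
    split_ifs <;> first | exact ‹False›.elim | omega

lemma rot_bijOn (N t : ℕ) (hN : 0 < N) (ht : t ≤ N) :
    Set.BijOn (fun i => (i + t) % N) (Set.Ico 0 N) (Set.Ico 0 N) := by
  refine ⟨?_, ?_, ?_⟩
  · intro i _
    simp only [Set.mem_Ico]
    exact ⟨Nat.zero_le _, Nat.mod_lt _ hN⟩
  · intro i hi j hj h
    simp only [Set.mem_Ico] at hi hj
    have h2 : i % N = j % N := Nat.ModEq.add_right_cancel' t (h : i + t ≡ j + t [MOD N])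
    rwa [Nat.mod_eq_of_lt hi.2, Nat.mod_eq_of_lt hj.2] at h2
  · intro y hy
    simp only [Set.mem_Ico] at hy
    refine ⟨(y + (N - t)) % N, ⟨Nat.zero_le _, Nat.mod_lt _ hN⟩, ?_⟩
    simp only [Nat.mod_add_mod]
    rw [show y + (N - t) + t = y + N by omega, Nat.add_mod_right, Nat.mod_eq_of_lt hy.2]

theorem stmt11 (N r : ℕ) (hN : 2 ≤ N)
    (hr : (N = 2 ∧ r = 1) ∨
      (Even N ∧ 4 ≤ N ∧ (r = 1 ∨ r = N - 1 ∨ (Even r ∧ 2 ≤ r ∧ r ≤ N - 2))) ∨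
      (Odd N ∧ ((Odd r ∧ 1 ≤ r ∧ r ≤ N - 2) ∨ r = N - 1))) :
    ∃ a : ℕ → ℕ, Set.BijOn a (Set.Ico 0 N) (Set.Icc 1 N) ∧
      (∀ i < N, a i + a ((i + 1) % N) ∈ ({N, N + 1, N + 2} : Set ℕ)) ∧
      ((a (N - 1) : ℤ) - (a 0 : ℤ)).natAbs = r := by
  obtain ⟨s, hs1, hsr⟩ : ∃ s, s + 1 < N ∧ ((zz N s : ℤ) - (zz N (s + 1) : ℤ)).natAbs = r := by
    have key : ∀ s, s + 1 < N →
        (s = 0 ∧ r = N - 1) ∨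
        (N % 2 = 0 ∧ s = N / 2 ∧ r = 1) ∨
        (2 * s = N - r ∧ 1 ≤ s ∧ 1 ≤ r ∧ r ≤ N - 2 ∧ r % 2 = (N - 2 * s) % 2) →
        ((zz N s : ℤ) - (zz N (s + 1) : ℤ)).natAbs = r := by
      intro s hs hc
      simp only [zz]
      split_ifs <;> first | exact ‹False›.elim | omega
    rcases hr with ⟨h2, h1⟩ | ⟨he, h4, h⟩ | ⟨ho, h⟩
    · exact ⟨0, by omega, key 0 (by omega) (Or.inl ⟨rfl, by omega⟩)⟩
    · rw [Nat.even_iff] at he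
      rcases h with h1 | hN1 | ⟨hre, hr2, hrN⟩
      · exact ⟨N / 2, by omega, key (N / 2) (by omega) (Or.inr (Or.inl ⟨he, rfl, h1⟩))⟩
      · exact ⟨0, by omega, key 0 (by omega) (Or.inl ⟨rfl, hN1⟩)⟩
      · rw [Nat.even_iff] at hre
        exact ⟨(N - r) / 2, by omega, key _ (by omega)
          (Or.inr (Or.inr ⟨by omega, by omega, by omega, hrN, by omega⟩))⟩
    · rw [Nat.odd_iff] at ho
      rcases h with ⟨hro, hr1, hrN⟩ | hN1
      · rw [Nat.odd_iff] at hro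
        exact ⟨(N - r) / 2, by omega, key _ (by omega)
          (Or.inr (Or.inr ⟨by omega, by omega, by omega, hrN, by omega⟩))⟩
      · exact ⟨0, by omega, key 0 (by omega) (Or.inl ⟨rfl, hN1⟩)⟩
  refine ⟨fun i => zz N ((i + (s + 1)) % N), ?_, ?_, ?_⟩
  · exact (zz_bijOn N hN).comp (rot_bijOn N (s + 1) (by omega) (by omega))
  · intro i hi
    simp only [Set.mem_insert_iff, Set.mem_singleton_iff]
    have he : ((i + 1) % N + (s + 1)) % N = ((i + (s + 1)) % N + 1) % N := by
      rw [Nat.mod_add_mod, Nat.mod_add_mod, show i + 1 + (s + 1) = i + (s + 1) + 1 by ring]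
    rw [he]
    exact zz_sum N ((i + (s + 1)) % N) hN (Nat.mod_lt _ (by omega))
  · have h1 : (N - 1 + (s + 1)) % N = s := by
      rw [show N - 1 + (s + 1) = N + s by omega, Nat.add_mod_left, Nat.mod_eq_of_lt (by omega)]
    have h2 : (0 + (s + 1)) % N = s + 1 := by
      rw [Nat.zero_add, Nat.mod_eq_of_lt hs1]
    simp only [h1, h2]
    exact hsr
end

section
/- Let N ≥ 2, a ≥ 1, and let r satisfy: r = 1 if N = 2; r ∈ ({2,…,N−2} ∩ evens) ∪ {1, N−1} if N ≥ 4 is even; r ∈ ({1,…,N−2} ∩ odds) ∪ {N−1} if N is odd. Then the integers in the interval [a+1, a+N] can be arranged into a sequence (a₁,…,a_N) using each integer exactly once such that a_i + a_{i+1} ∈ {2a+N, 2a+N+1, 2a+N+2} for all 1 ≤ i ≤ N−1 and |a_N − a₁| = r. -/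
open SimpleGraph

/-- half point -/
def mm (N : ℕ) : ℕ := if N % 2 = 0 then N / 2 else N

/-- the Hamiltonian cycle -/
def vv (N k : ℕ) : ℕ :=
  if k < mm N then (if k % 2 = 0 then k + 1 else N - k)
  else (if k % 2 = 0 then N - k else k + 1)

lemma vv_range (N k : ℕ) (hN : 2 ≤ N) (hk : k < N) : 1 ≤ vv N k ∧ vv N k ≤ N := by
  unfold vv mm
  have h2 : k % 2 = 0 ∨ k % 2 = 1 := Nat.mod_two_eq_zero_or_one k
  split_ifs <;> omega

lemma vv_inj (N : ℕ) (hN : 2 ≤ N) {k l : ℕ} (hk : k < N) (hl : l < N)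
    (h : vv N k = vv N l) : k = l := by
  unfold vv mm at h
  have h2 : k % 2 = 0 ∨ k % 2 = 1 := Nat.mod_two_eq_zero_or_one k
  have h3 : l % 2 = 0 ∨ l % 2 = 1 := Nat.mod_two_eq_zero_or_one l
  have h4 : N % 2 = 0 ∨ N % 2 = 1 := Nat.mod_two_eq_zero_or_one N
  split_ifs at h <;> omega

lemma vv_sum (N k : ℕ) (hN : 2 ≤ N) (h : k + 1 < N) :
    N ≤ vv N k + vv N (k + 1) ∧ vv N k + vv N (k + 1) ≤ N + 2 := by
  unfold vv mm
  have h2 : k % 2 = 0 ∨ k % 2 = 1 := Nat.mod_two_eq_zero_or_one k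
  have h4 : N % 2 = 0 ∨ N % 2 = 1 := Nat.mod_two_eq_zero_or_one N
  split_ifs <;> omega

lemma vv_close (N : ℕ) (hN : 2 ≤ N) : vv N (N - 1) + vv N 0 = N + 1 := by
  unfold vv mm
  have h4 : N % 2 = 0 ∨ N % 2 = 1 := Nat.mod_two_eq_zero_or_one N
  split_ifs <;> omega

lemma main_aux (N a s r : ℕ) (hN : 2 ≤ N) (hs : s < N)
    (hdiff : (((a + vv N (if s = 0 then N - 1 else s - 1) : ℕ) : ℤ)
      - ((a + vv N s : ℕ) : ℤ)).natAbs = r) :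
    ∃ b : ℕ → ℕ, Set.BijOn b (Set.Ico 0 N) (Set.Icc (a + 1) (a + N)) ∧
      (∀ i, i + 1 < N →
        b i + b (i + 1) ∈ ({2 * a + N, 2 * a + N + 1, 2 * a + N + 2} : Set ℕ)) ∧
      ((b (N - 1) : ℤ) - (b 0 : ℤ)).natAbs = r := by
  set b : ℕ → ℕ := fun j => a + vv N (if j + s < N then j + s else j + s - N) with hb
  have hidx : ∀ j, j < N → (if j + s < N then j + s else j + s - N) < N := by
    intro j hj; split_ifs <;> omega
  have hmaps : Set.MapsTo b (Set.Ico 0 N) (Set.Icc (a + 1) (a + N)) := by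
    intro j hj
    simp only [Set.mem_Ico] at hj
    have := vv_range N _ hN (hidx j hj.2)
    simp only [Set.mem_Icc, hb]
    omega
  have hinj : Set.InjOn b (Set.Ico 0 N) := by
    intro j1 h1 j2 h2 heq
    simp only [Set.mem_Ico] at h1 h2
    simp only [hb] at heq
    have hvv : vv N (if j1 + s < N then j1 + s else j1 + s - N)
        = vv N (if j2 + s < N then j2 + s else j2 + s - N) := by omega
    have := vv_inj N hN (hidx j1 h1.2) (hidx j2 h2.2) hvv
    split_ifs at this <;> omega
  have himg : b '' (Set.Ico 0 N) = Set.Icc (a + 1) (a + N) := by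
    apply Set.eq_of_subset_of_ncard_le
    · rintro _ ⟨j, hj, rfl⟩; exact hmaps hj
    · rw [Set.ncard_image_of_injOn hinj]
      rw [← Finset.coe_Icc, Set.ncard_coe_finset, Nat.card_Icc,
        ← Finset.coe_Ico, Set.ncard_coe_finset, Nat.card_Ico]
      omega
    · exact Set.finite_Icc _ _
  refine ⟨b, ⟨hmaps, hinj, ?_⟩, ?_, ?_⟩
  · have := Set.surjOn_image b (Set.Ico 0 N)
    rwa [himg] at this
  · intro i hi
    simp only [Set.mem_insert_iff, Set.mem_singleton_iff, hb]
    rcases lt_trichotomy (i + 1 + s) N with hc | hc | hc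
    · rw [if_pos (by omega), if_pos hc, show i + 1 + s = (i + s) + 1 from by omega]
      have := vv_sum N (i + s) hN (by omega)
      omega
    · rw [if_pos (by omega), if_neg (by omega),
        show i + s = N - 1 from by omega, show i + 1 + s - N = 0 from by omega]
      have := vv_close N hN
      omega
    · rw [if_neg (by omega), if_neg (by omega),
        show i + 1 + s - N = (i + s - N) + 1 from by omega]
      have := vv_sum N (i + s - N) hN (by omega)
      omega
  · have e0 : b 0 = a + vv N s := by
      simp only [hb]; rw [show (if 0 + s < N then 0 + s else 0 + s - N) = s from by
        split_ifs <;> omega]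
    have e1 : b (N - 1) = a + vv N (if s = 0 then N - 1 else s - 1) := by
      simp only [hb]
      rw [show (if N - 1 + s < N then N - 1 + s else N - 1 + s - N)
        = (if s = 0 then N - 1 else s - 1) from by split_ifs <;> omega]
    rw [e0, e1]
    exact hdiff

lemma vv0 (N : ℕ) (hN : 2 ≤ N) : vv N 0 = 1 := by
  unfold vv mm; split_ifs <;> omega

lemma vvN (N : ℕ) (hN : 2 ≤ N) : vv N (N - 1) = N := by
  unfold vv mm
  have h4 : N % 2 = 0 ∨ N % 2 = 1 := Nat.mod_two_eq_zero_or_one N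
  split_ifs <;> omega

lemma vv_cut (N s : ℕ) (hN : 2 ≤ N) (h1 : 1 ≤ s) (hsm : s < mm N) :
    ((vv N (s - 1) : ℤ) - (vv N s : ℤ)).natAbs = ((N : ℤ) - 2 * s).natAbs := by
  unfold vv mm
  unfold mm at hsm
  have h2 : s % 2 = 0 ∨ s % 2 = 1 := Nat.mod_two_eq_zero_or_one s
  have h4 : N % 2 = 0 ∨ N % 2 = 1 := Nat.mod_two_eq_zero_or_one N
  split_ifs at hsm ⊢ <;> omega

lemma vv_cutmid (N : ℕ) (hN : 2 ≤ N) (hNm : N % 2 = 0) :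
    ((vv N (N / 2 - 1) : ℤ) - (vv N (N / 2) : ℤ)).natAbs = 1 := by
  unfold vv mm
  have h2 : N / 2 % 2 = 0 ∨ N / 2 % 2 = 1 := Nat.mod_two_eq_zero_or_one _
  split_ifs <;> omega

theorem stmt12 (N a r : ℕ) (hN : 2 ≤ N) (ha : 1 ≤ a)
    (hr : (N = 2 ∧ r = 1) ∨
      (Even N ∧ 4 ≤ N ∧ (r = 1 ∨ r = N - 1 ∨ (Even r ∧ 2 ≤ r ∧ r ≤ N - 2))) ∨
      (Odd N ∧ ((Odd r ∧ 1 ≤ r ∧ r ≤ N - 2) ∨ r = N - 1))) :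
    ∃ b : ℕ → ℕ, Set.BijOn b (Set.Ico 0 N) (Set.Icc (a + 1) (a + N)) ∧
      (∀ i, i + 1 < N →
        b i + b (i + 1) ∈ ({2 * a + N, 2 * a + N + 1, 2 * a + N + 2} : Set ℕ)) ∧
      ((b (N - 1) : ℤ) - (b 0 : ℤ)).natAbs = r := by
  rcases hr with ⟨hN2, hr1⟩ | ⟨hNe, hN4, hc⟩ | ⟨hNo, hc⟩
  · -- N = 2, r = 1
    refine main_aux N a 0 r hN (by omega) ?_
    rw [if_pos rfl, vvN N hN, vv0 N hN]
    omega
  · -- N even, N ≥ 4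
    have hNm : N % 2 = 0 := Nat.even_iff.mp hNe
    rcases hc with hr1 | hr1 | ⟨hre, hr2, hr3⟩
    · -- r = 1, cut at s = N/2
      refine main_aux N a (N / 2) r hN (by omega) ?_
      rw [if_neg (by omega)]
      have := vv_cutmid N hN hNm
      push_cast
      omega
    · -- r = N - 1
      refine main_aux N a 0 r hN (by omega) ?_
      rw [if_pos rfl, vvN N hN, vv0 N hN]
      omega
    · -- r even, 2 ≤ r ≤ N - 2
      have hrm : r % 2 = 0 := Nat.even_iff.mp hre
      refine main_aux N a ((N - r) / 2) r hN (by omega) ?_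
      rw [if_neg (by omega)]
      have := vv_cut N ((N - r) / 2) hN (by omega) (by unfold mm; split_ifs <;> omega)
      push_cast
      omega
  · -- N odd
    have hNm : N % 2 = 1 := Nat.odd_iff.mp hNo
    rcases hc with ⟨hro, hr2, hr3⟩ | hr1
    · have hrm : r % 2 = 1 := Nat.odd_iff.mp hro
      refine main_aux N a ((N - r) / 2) r hN (by omega) ?_
      rw [if_neg (by omega)]
      have := vv_cut N ((N - r) / 2) hN (by omega) (by unfold mm; split_ifs <;> omega)
      push_cast
      omega
    · refine main_aux N a 0 r hN (by omega) ?_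
      rw [if_pos rfl, vvN N hN, vv0 N hN]
      omega
end
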